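/- arXiv:math/0311118 — 5 statements merged into one kernel-verified Lean document; each statement's English description precedes it below -/
import Mathlib

section
/- With the Dirac setup below, assume moreover that each basis vector is an ad h-eigenvector: ⁅h, X_l⁆ = ν_l·X_l with ν_l ∈ ℤ for 1 ≤ l ≤ p, and ⁅h, Z̄_s⁆ = −n_s·Z̄_s with n_s ∈ ℤ for 1 ≤ s ≤ k. Then for every t ∈ ℂ∖{0}, every q ∈ ℂ^k and all indices l, m: C(t^{2+n_1}q_1, …, t^{2+n_k}q_k)_{l,m} = t^{2+ν_l+ν_m} · C(q₁,…,q_k)_{l,m} (integer powers of t). -/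
open Module Matrix

lemma killing_weights_zero
    {L : Type*} [LieRing L] [LieAlgebra ℂ L] [Module.Finite ℂ L]
    (h x y : L) (a b : ℂ) (hx : ⁅h, x⁆ = a • x) (hy : ⁅h, y⁆ = b • y)
    (hab : a + b ≠ 0) : killingForm ℂ L x y = 0 := by
  have h1 : killingForm ℂ L ⁅h, x⁆ y = killingForm ℂ L h ⁅x, y⁆ :=
    LieModule.traceForm_apply_lie_apply ℂ L L h x y
  have h2 : killingForm ℂ L ⁅h, y⁆ x = killingForm ℂ L h ⁅y, x⁆ :=
    LieModule.traceForm_apply_lie_apply ℂ L L h y x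
  rw [hx] at h1
  rw [hy, ← lie_skew y x, map_neg] at h2
  simp only [_root_.map_smul, LinearMap.smul_apply, smul_eq_mul] at h1 h2
  have hsym : killingForm ℂ L y x = killingForm ℂ L x y :=
    LieModule.traceForm_comm ℂ L L y x
  have : (a + b) * killingForm ℂ L x y = 0 := by
    linear_combination h1 + h2 - b * hsym
  rcases mul_eq_zero.mp this with h' | h'
  · exact absurd h' hab
  · exact h'

/-- Dirac setup with ad h-eigenvector bases: ⁅h,X_l⁆ = ν_l X_l and ⁅h,Z̄_s⁆ = −n_s Z̄_s
with integer weights.  Then for every t ≠ 0 and every q,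
C(t^{2+n_1}q_1,…,t^{2+n_k}q_k)_{l,m} = t^{2+ν_l+ν_m} C(q)_{l,m}. -/
theorem C_quasi_homogeneous
    {L : Type*} [LieRing L] [LieAlgebra ℂ L] [FiniteDimensional ℂ L]
    [LieAlgebra.IsSemisimple ℂ L]
    (h e f : L)
    (hhe : ⁅h, e⁆ = (2 : ℂ) • e) (hhf : ⁅h, f⁆ = (-2 : ℂ) • f) (hef : ⁅e, f⁆ = h)
    (k p : ℕ) (ge 𝔫 : Submodule ℂ L)
    (hge : ∀ x, x ∈ ge ↔ ⁅e, x⁆ = 0)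
    (hcompl : IsCompl ge 𝔫)
    (hinv : ∀ x ∈ 𝔫, ⁅h, x⁆ ∈ 𝔫)
    (hk : finrank ℂ ge = k) (hp : finrank ℂ 𝔫 = p)
    (BB : Basis (Fin k ⊕ Fin p) ℂ L)
    (hZ : ∀ i, BB (Sum.inl i) ∈ ge) (hX : ∀ j, BB (Sum.inr j) ∈ 𝔫)
    (Db : Fin k ⊕ Fin p → L)
    (hdual : ∀ a b, killingForm ℂ L (BB a) (Db b) = if a = b then 1 else 0)
    (ν : (Fin k → ℂ) → L) (hν : ∀ q, ν q = ∑ s, q s • Db (Sum.inl s))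
    (C : (Fin k → ℂ) → Matrix (Fin p) (Fin p) ℂ)
    (hC : ∀ q l m, C q l m = killingForm ℂ L (e + ν q) ⁅BB (Sum.inr l), BB (Sum.inr m)⁆)
    (w : Fin p → ℤ) (hw : ∀ l, ⁅h, BB (Sum.inr l)⁆ = (w l : ℂ) • BB (Sum.inr l))
    (nn : Fin k → ℤ) (hnn : ∀ s, ⁅h, Db (Sum.inl s)⁆ = (-(nn s) : ℂ) • Db (Sum.inl s)) :
    ∀ t : ℂ, t ≠ 0 → ∀ (q : Fin k → ℂ) (l m : Fin p),
      C (fun s => t ^ (2 + nn s) * q s) l m = t ^ (2 + w l + w m) * C q l m := by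
  intro t ht q l m
  set Y : L := ⁅BB (Sum.inr l), BB (Sum.inr m)⁆ with hYdef
  have hY : ⁅h, Y⁆ = ((w l + w m : ℤ) : ℂ) • Y := by
    rw [hYdef, leibniz_lie, hw, hw, smul_lie, lie_smul]
    push_cast
    rw [add_smul]
  have expand : ∀ q' : Fin k → ℂ, C q' l m =
      killingForm ℂ L e Y + ∑ s, q' s * killingForm ℂ L (Db (Sum.inl s)) Y := by
    intro q'
    rw [hC, hν, map_add, LinearMap.add_apply]
    congr 1
    rw [map_sum, LinearMap.sum_apply]
    exact Finset.sum_congr rfl fun s _ => by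
      rw [_root_.map_smul, LinearMap.smul_apply, smul_eq_mul]
  rw [expand, expand q, mul_add, Finset.mul_sum]
  congr 1
  · by_cases hlm : (2 : ℤ) + w l + w m = 0
    · rw [hlm, zpow_zero, one_mul]
    · have he0 : killingForm ℂ L e Y = 0 := by
        apply killing_weights_zero h e Y 2 ((w l + w m : ℤ) : ℂ) hhe hY
        intro hc
        apply hlm
        have h2 : ((2 : ℤ) : ℂ) + ((w l + w m : ℤ) : ℂ) = 0 := by exact_mod_cast hc
        have h3 : (2 : ℤ) + (w l + w m) = 0 := by exact_mod_cast h2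
        omega
      rw [he0, mul_zero]
  · refine Finset.sum_congr rfl fun s _ => ?_
    by_cases hs : nn s = w l + w m
    · rw [hs, show (2 : ℤ) + w l + w m = 2 + (w l + w m) from by ring]
      ring
    · have hd0 : killingForm ℂ L (Db (Sum.inl s)) Y = 0 := by
        apply killing_weights_zero h _ Y (-(nn s) : ℂ) ((w l + w m : ℤ) : ℂ) (hnn s) hY
        intro hc
        apply hs
        have h2 : ((-(nn s) + (w l + w m) : ℤ) : ℂ) = 0 := by push_cast at hc ⊢; linear_combination hc
        have h3 : -(nn s) + (w l + w m) = 0 := by exact_mod_cast h2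
        omega
      rw [hd0, mul_zero, mul_zero, mul_zero]
end

section
/- With the Dirac setup below, if the complement 𝔫 is additionally a Lie subalgebra of 𝔤 (⁅𝔫,𝔫⁆ ⊆ 𝔫), then C(q) = C(0) is invertible, and every entry of the transverse Poisson matrix Λ(q) = A(q) + B(q) C(0)⁻¹ D(q) is a polynomial function of q ∈ ℂ^k of total degree at most 2 (the transverse Poisson structure is quadratic). -/
/-!
Since `ν q` is Killing-orthogonal to `𝔫` and `⁅𝔫, 𝔫⁆ ⊆ 𝔫`, the entry `K(e + ν q, ⁅X_l, X_m⁆)`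
equals `K(e, ⁅X_l, X_m⁆)`, so `C q` is the Gram matrix of the Kirillov–Kostant form
`(x, y) ↦ K(e, ⁅x, y⁆)` on `𝔫`, independently of `q`. This form is nondegenerate on any
complement `𝔫` of `𝔤^e`: if `K(e, ⁅x, 𝔫⁆) = 0` with `x ∈ 𝔫`, then by invariance `K(⁅e, x⁆, ·)`
vanishes on `𝔫` and on `𝔤^e`, so `⁅e, x⁆ = 0` (`K` is nondegenerate, having a dual basis) and
`x ∈ 𝔤^e ∩ 𝔫 = 0`. Finally `A` and `D` are linear in `q` while `C(0)⁻¹` is constant, so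
`A + Dᵀ C(0)⁻¹ D` is quadratic in `q`.
-/

open Module Matrix

namespace Module.Basis

theorem span_range_comp_inr_eq {ι κ R M : Type*} [Ring R] [AddCommGroup M] [Module R M]
    (b : Basis (ι ⊕ κ) R M) {P Q : Submodule R M} (hPQ : Disjoint P Q)
    (hP : ∀ i, b (.inl i) ∈ P) (hQ : ∀ j, b (.inr j) ∈ Q) :
    Submodule.span R (Set.range (b ∘ Sum.inr)) = Q := by
  open Submodule Set in
  refine le_antisymm (span_le.mpr (range_subset_iff.mpr hQ)) fun x hx => ?_
  have hx_sup : x ∈ span R (range (b ∘ Sum.inl)) ⊔ span R (range (b ∘ Sum.inr)) := by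
    rw [← span_union, ← Sum.elim_range, Sum.elim_comp_inl_inr, b.span_eq]
    exact mem_top
  obtain ⟨u, hu, v, hv, rfl⟩ := mem_sup.mp hx_sup
  have huP : u ∈ P := span_le.mpr (range_subset_iff.mpr hP) hu
  have huQ : u ∈ Q := by
    simpa using Q.sub_mem hx (span_le.mpr (range_subset_iff.mpr hQ) hv)
  rwa [disjoint_def.mp hPQ u huP huQ, zero_add]

variable {ι R M : Type*} [CommRing R] [AddCommGroup M] [Module R M]
  {B : LinearMap.BilinForm R M}

theorem separatingLeft_of_dual [DecidableEq ι] (b : Basis ι R M) {d : ι → M}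
    (hd : ∀ i j, B (b i) (d j) = if i = j then 1 else 0) : B.SeparatingLeft := by
  intro y hy
  have hcoord : ∀ j, B.flip (d j) = b.coord j :=
    fun j => b.ext fun i => by simp [hd, Finsupp.single_apply]
  exact b.forall_coord_eq_zero_iff.mp fun j => by rw [← hcoord]; exact hy (d j)

theorem apply_dual_inl_eq_zero_of_mem_span {κ : Type*} [DecidableEq (ι ⊕ κ)]
    (b : Basis (ι ⊕ κ) R M) {d : ι ⊕ κ → M}
    (hd : ∀ i j, B (b i) (d j) = if i = j then 1 else 0)
    {x : M} (hx : x ∈ Submodule.span R (Set.range (b ∘ Sum.inr))) (i : ι) :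
    B x (d (.inl i)) = 0 := by
  have hker :
      Submodule.span R (Set.range (b ∘ Sum.inr)) ≤ LinearMap.ker (B.flip (d (.inl i))) :=
    Submodule.span_le.mpr (Set.range_subset_iff.mpr fun j => by simp [hd])
  exact hker hx

end Module.Basis

section KirillovKostant

variable {R L : Type*} [CommRing R] [LieRing L] [LieAlgebra R L]

def kirillovKostantForm (B : LinearMap.BilinForm R L) (e : L) : LinearMap.BilinForm R L :=
  (LieModule.toEnd R L L : L →ₗ[R] Module.End R L).compr₂ (B e)

@[simp]
theorem kirillovKostantForm_apply (B : LinearMap.BilinForm R L) (e x y : L) :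
    kirillovKostantForm B e x y = B e ⁅x, y⁆ :=
  rfl

theorem separatingLeft_kirillovKostantForm_domRestrict {B : LinearMap.BilinForm R L}
    (hinv : ∀ x y z, B ⁅x, y⁆ z = B x ⁅y, z⁆) (hsep : B.SeparatingLeft)
    {e : L} {ge 𝔫 : Submodule R L} (hge : ∀ x, x ∈ ge ↔ ⁅e, x⁆ = 0) (hcompl : IsCompl ge 𝔫) :
    ((kirillovKostantForm B e).domRestrict₁₂ 𝔫 𝔫).SeparatingLeft := by
  rintro ⟨x, hx𝔫⟩ hx
  have hex : ∀ w, B ⁅e, x⁆ w = 0 := by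
    intro w
    obtain ⟨z, hz, y, hy, rfl⟩ :=
      Submodule.mem_sup.mp (hcompl.sup_eq_top ▸ Submodule.mem_top : w ∈ ge ⊔ 𝔫)
    have hz0 : B ⁅e, x⁆ z = 0 := by
      rw [← lie_skew, map_neg, LinearMap.neg_apply, hinv, (hge z).mp hz, map_zero, neg_zero]
    have hy0 : B ⁅e, x⁆ y = 0 := by rw [hinv]; exact hx ⟨y, hy⟩
    rw [map_add, hz0, hy0, add_zero]
  have hxge : x ∈ ge := (hge x).mpr (hsep _ hex)
  exact Subtype.ext (Submodule.disjoint_def.mp hcompl.disjoint x hxge hx𝔫)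

end KirillovKostant

section PolynomialFunctions

variable {σ R : Type*} [CommRing R]

def IsPolynomialOfDegreeLE (n : ℕ) (f : (σ → R) → R) : Prop :=
  ∃ P : MvPolynomial σ R, P.totalDegree ≤ n ∧ ∀ q, f q = MvPolynomial.eval q P

namespace IsPolynomialOfDegreeLE

variable {m n : ℕ} {f g : (σ → R) → R}

theorem mono (hf : IsPolynomialOfDegreeLE m f) (hmn : m ≤ n) : IsPolynomialOfDegreeLE n f :=
  let ⟨P, hP, hfP⟩ := hf
  ⟨P, hP.trans hmn, hfP⟩

theorem const (c : R) : IsPolynomialOfDegreeLE (σ := σ) n fun _ => c :=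
  ⟨MvPolynomial.C c, by simp, by simp⟩

theorem add (hf : IsPolynomialOfDegreeLE n f) (hg : IsPolynomialOfDegreeLE n g) :
    IsPolynomialOfDegreeLE n fun q => f q + g q :=
  let ⟨P, hP, hfP⟩ := hf
  let ⟨Q, hQ, hgQ⟩ := hg
  ⟨P + Q, (MvPolynomial.totalDegree_add P Q).trans (max_le hP hQ), by simp [hfP, hgQ]⟩

theorem mul (hf : IsPolynomialOfDegreeLE m f) (hg : IsPolynomialOfDegreeLE n g) :
    IsPolynomialOfDegreeLE (m + n) fun q => f q * g q :=
  let ⟨P, hP, hfP⟩ := hf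
  let ⟨Q, hQ, hgQ⟩ := hg
  ⟨P * Q, (MvPolynomial.totalDegree_mul P Q).trans (add_le_add hP hQ), by simp [hfP, hgQ]⟩

theorem sum {ι : Type*} (s : Finset ι) {f : ι → (σ → R) → R}
    (hf : ∀ i ∈ s, IsPolynomialOfDegreeLE n (f i)) :
    IsPolynomialOfDegreeLE n fun q => ∑ i ∈ s, f i q := by
  rw [← Finset.sum_fn]
  exact Finset.sum_induction f (IsPolynomialOfDegreeLE n) (fun _ _ => add) (const 0) hf

theorem of_linearMap [Fintype σ] (φ : (σ → R) →ₗ[R] R) : IsPolynomialOfDegreeLE 1 φ := by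
  classical
  refine ⟨∑ s, MvPolynomial.monomial (Finsupp.single s 1) (φ (Pi.single s 1)),
    (MvPolynomial.totalDegree_finsetSum _ _).trans (Finset.sup_le fun s _ => ?_), fun q => ?_⟩
  · exact (MvPolynomial.totalDegree_monomial_le _ _).trans (by simp)
  · rw [φ.pi_apply_eq_sum_univ q, MvPolynomial.eval_sum]
    refine Finset.sum_congr rfl fun s _ => ?_
    simp only [MvPolynomial.eval_monomial, Finsupp.prod_single_index, pow_one, pow_zero,
      smul_eq_mul, mul_comm (q s)]
    congr
    ext j
    simp [Pi.single_apply, eq_comm]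

end IsPolynomialOfDegreeLE

theorem isPolynomialOfDegreeLE_add_transpose_mul_mul {ι κ : Type*} [Fintype ι]
    {A : (σ → R) → Matrix κ κ R} {D : (σ → R) → Matrix ι κ R} (M : Matrix ι ι R)
    (hA : ∀ i j, IsPolynomialOfDegreeLE 2 fun q => A q i j)
    (hD : ∀ l j, IsPolynomialOfDegreeLE 1 fun q => D q l j) (i j : κ) :
    IsPolynomialOfDegreeLE 2 fun q => (A q + (D q)ᵀ * M * D q) i j := by
  simp only [Matrix.add_apply, mul_apply, transpose_apply]
  exact (hA i j).add <| .sum _ fun l _ =>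
    (IsPolynomialOfDegreeLE.sum _ fun l' _ => (hD l' i).mul (.const (n := 0) (M l' l))).mul
      (hD l j)

end PolynomialFunctions

theorem transverse_poisson_quadratic_of_subalgebra_complement_general
    {L : Type*} [LieRing L] [LieAlgebra ℂ L] [FiniteDimensional ℂ L]
    (e : L)
    (k p : ℕ) (ge 𝔫 : Submodule ℂ L)
    (hge : ∀ x, x ∈ ge ↔ ⁅e, x⁆ = 0)
    (hcompl : IsCompl ge 𝔫)
    (hsub : ∀ x ∈ 𝔫, ∀ y ∈ 𝔫, ⁅x, y⁆ ∈ 𝔫)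
    (BB : Basis (Fin k ⊕ Fin p) ℂ L)
    (hZ : ∀ i, BB (Sum.inl i) ∈ ge) (hX : ∀ j, BB (Sum.inr j) ∈ 𝔫)
    (Db : Fin k ⊕ Fin p → L)
    (hdual : ∀ a b, killingForm ℂ L (BB a) (Db b) = if a = b then 1 else 0)
    (ν : (Fin k → ℂ) → L) (hν : ∀ q, ν q = ∑ s, q s • Db (Sum.inl s))
    (C : (Fin k → ℂ) → Matrix (Fin p) (Fin p) ℂ)
    (hC : ∀ q l m, C q l m = killingForm ℂ L (e + ν q) ⁅BB (Sum.inr l), BB (Sum.inr m)⁆)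
    (D : (Fin k → ℂ) → Matrix (Fin p) (Fin k) ℂ)
    (hD : ∀ q l j, D q l j = killingForm ℂ L (ν q) ⁅BB (Sum.inr l), BB (Sum.inl j)⁆)
    (A : (Fin k → ℂ) → Matrix (Fin k) (Fin k) ℂ)
    (hA : ∀ q i j, A q i j = killingForm ℂ L (ν q) ⁅BB (Sum.inl i), BB (Sum.inl j)⁆) :
    (∀ q, C q = C 0) ∧ IsUnit (C 0).det ∧
    ∀ i j : Fin k, ∃ P : MvPolynomial (Fin k) ℂ, P.totalDegree ≤ 2 ∧
      ∀ q, (A q + (D q)ᵀ * (C 0)⁻¹ * D q) i j = MvPolynomial.eval q P := by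
  set K := killingForm ℂ L
  have hspan := BB.span_range_comp_inr_eq hcompl.disjoint hZ hX
  have hν_perp : ∀ q, ∀ x ∈ 𝔫, K (ν q) x = 0 := fun q x hx => by
    rw [hν, map_sum, LinearMap.sum_apply]
    refine Finset.sum_eq_zero fun s _ => ?_
    rw [map_smul, LinearMap.smul_apply, LieModule.traceForm_comm,
      BB.apply_dual_inl_eq_zero_of_mem_span hdual (hspan ▸ hx), smul_zero]
  let bN : Basis (Fin p) ℂ 𝔫 := (Basis.span (BB.linearIndependent.comp _ Sum.inr_injective)).map
    (LinearEquiv.ofEq _ _ hspan)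
  have hC_gram (q) :
      C q = LinearMap.toMatrix₂ bN bN ((kirillovKostantForm K e).domRestrict₁₂ 𝔫 𝔫) := by
    ext l m
    simp [hC, bN, Basis.span_apply, LinearMap.domRestrict₁₂_apply,
      hν_perp q _ (hsub _ (hX l) _ (hX m))]
  refine ⟨fun q => (hC_gram q).trans (hC_gram 0).symm, ?_, ?_⟩
  · rw [hC_gram 0, isUnit_iff_ne_zero, ← LinearMap.separatingLeft_iff_det_ne_zero]
    exact separatingLeft_kirillovKostantForm_domRestrict
      (LieModule.traceForm_apply_lie_apply ℂ L L) (BB.separatingLeft_of_dual hdual) hge hcompl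
  · have hν_poly (w : L) : IsPolynomialOfDegreeLE 1 fun q => K (ν q) w := by
      have hν_linear : ν = Fintype.linearCombination ℂ (Db ∘ Sum.inl) :=
        funext fun q => by rw [hν, Fintype.linearCombination_apply]; rfl
      rw [hν_linear]
      exact .of_linearMap (K.flip w ∘ₗ Fintype.linearCombination ℂ (Db ∘ Sum.inl))
    refine isPolynomialOfDegreeLE_add_transpose_mul_mul _ (fun i j => ?_) (fun l j => ?_)
    · simpa only [hA] using (hν_poly _).mono one_le_two
    · simpa only [hD] using hν_poly _

/-- Dirac setup: if the complement 𝔫 is moreover a Lie subalgebra of 𝔤, then C(q) = C(0)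
is invertible and every entry of Λ(q) = A(q) + B(q) C(0)⁻¹ D(q) is a polynomial function
of q of total degree at most 2: the transverse Poisson structure is quadratic. -/
theorem transverse_poisson_quadratic_of_subalgebra_complement
    {L : Type*} [LieRing L] [LieAlgebra ℂ L] [FiniteDimensional ℂ L]
    [LieAlgebra.IsSemisimple ℂ L]
    (h e f : L)
    (hhe : ⁅h, e⁆ = (2 : ℂ) • e) (hhf : ⁅h, f⁆ = (-2 : ℂ) • f) (hef : ⁅e, f⁆ = h)
    (k p : ℕ) (ge 𝔫 : Submodule ℂ L)
    (hge : ∀ x, x ∈ ge ↔ ⁅e, x⁆ = 0)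
    (hcompl : IsCompl ge 𝔫)
    (hsub : ∀ x ∈ 𝔫, ∀ y ∈ 𝔫, ⁅x, y⁆ ∈ 𝔫)
    (hk : finrank ℂ ge = k) (hp : finrank ℂ 𝔫 = p)
    (BB : Basis (Fin k ⊕ Fin p) ℂ L)
    (hZ : ∀ i, BB (Sum.inl i) ∈ ge) (hX : ∀ j, BB (Sum.inr j) ∈ 𝔫)
    (Db : Fin k ⊕ Fin p → L)
    (hdual : ∀ a b, killingForm ℂ L (BB a) (Db b) = if a = b then 1 else 0)
    (ν : (Fin k → ℂ) → L) (hν : ∀ q, ν q = ∑ s, q s • Db (Sum.inl s))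
    (C : (Fin k → ℂ) → Matrix (Fin p) (Fin p) ℂ)
    (hC : ∀ q l m, C q l m = killingForm ℂ L (e + ν q) ⁅BB (Sum.inr l), BB (Sum.inr m)⁆)
    (D : (Fin k → ℂ) → Matrix (Fin p) (Fin k) ℂ)
    (hD : ∀ q l j, D q l j = killingForm ℂ L (ν q) ⁅BB (Sum.inr l), BB (Sum.inl j)⁆)
    (A : (Fin k → ℂ) → Matrix (Fin k) (Fin k) ℂ)
    (hA : ∀ q i j, A q i j = killingForm ℂ L (ν q) ⁅BB (Sum.inl i), BB (Sum.inl j)⁆) :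
    (∀ q, C q = C 0) ∧ IsUnit (C 0).det ∧
    ∀ i j : Fin k, ∃ P : MvPolynomial (Fin k) ℂ, P.totalDegree ≤ 2 ∧
      ∀ q, (A q + (D q)ᵀ * (C 0)⁻¹ * D q) i j = MvPolynomial.eval q P :=
  transverse_poisson_quadratic_of_subalgebra_complement_general e k p ge 𝔫 hge hcompl hsub BB hZ hX
    Db hdual ν hν C hC D hD A hA
end

section
/- Let n ≥ 2 and let p₁ ≥ p₂ ≥ … ≥ p_s ≥ 1 be integers with p₁ + … + p_s = n and |p_i − p_j| ≤ 1 for all i,j. Let e ∈ sl(n,ℂ) be the block-diagonal nilpotent matrix whose diagonal blocks are the nilpotent Jordan blocks of sizes p₁,…,p_s (ones on the superdiagonal of each block, zeros elsewhere). Then there exists a Lie subalgebra 𝔰 of sl(n,ℂ) such that sl(n,ℂ) = 𝔤^e ⊕ 𝔰 as vector spaces, where 𝔤^e = {x ∈ sl(n,ℂ) : x·e − e·x = 0} is the centralizer of e. (In other words, the nilpotent adjoint orbit of partition (p₁,…,p_s) is conormal.) -/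
open Module

/-- The submodule sl(n,ℂ) of traceless matrices. -/
noncomputable def slSubmodule (n : ℕ) : Submodule ℂ (Matrix (Fin n) (Fin n) ℂ) :=
  LinearMap.ker (Matrix.traceLinearMap (Fin n) ℂ ℂ)

/-- The submodule of matrices commuting with a given matrix e. -/
noncomputable def commSubmodule {n : ℕ} (e : Matrix (Fin n) (Fin n) ℂ) :
    Submodule ℂ (Matrix (Fin n) (Fin n) ℂ) :=
  LinearMap.ker (LinearMap.mulLeft ℂ e - LinearMap.mulRight ℂ e)

/-- The block-diagonal nilpotent matrix with nilpotent Jordan blocks of sizes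
p 0 ≥ p 1 ≥ … ≥ p (s-1): the entry (i, i+1) is 1 unless i+1 is one of the partial sums
of the block sizes, all other entries are 0. -/
noncomputable def jordanOfPartition {n : ℕ} (s : ℕ) (p : Fin s → ℕ) :
    Matrix (Fin n) (Fin n) ℂ :=
  fun i j => if ((j : ℕ) = (i : ℕ) + 1 ∧
      ∀ t : Fin s, (j : ℕ) ≠ ∑ u ∈ Finset.univ.filter (fun u : Fin s => (u : ℕ) < (t : ℕ)), p u)
    then 1 else 0


/-!
In block coordinates `(b, i)`, `i < p b`, the Jordan matrix shifts each block. A matrix commuting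
with it is block-wise upper triangular Toeplitz, hence determined by the first rows of its blocks;
the entry `((b, 0), (c, 0))` is forced to vanish when `p b < p c`, and when the block sizes differ
by at most one all other first-row entries are free. Take `Z`, the matrices vanishing at these
free coordinates except at one diagonal entry `((b₀, 0), (b₀, 0))`. Its support relation is
transitive, so `Z` is closed under multiplication; together with the centralizer it spans all
matrices, and it meets the centralizer only in the multiples of the identity of block `b₀`,
whose trace is nonzero. Hence the traceless part of `Z` is a complement of `𝔤^e` in `𝔰𝔩`.
-/

open Finset Matrix

section TraceCorrection

variable {K V : Type*} [Field K] [AddCommGroup V] [Module K V] (f : V →ₗ[K] K)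
  {C Z : Submodule K V} {E : V}

theorem ker_inf_inf_ker_inf_eq_bot (hCZ : C ⊓ Z ≤ K ∙ E) (hE : f E ≠ 0) :
    LinearMap.ker f ⊓ C ⊓ (LinearMap.ker f ⊓ Z) = ⊥ := by
  rw [eq_bot_iff]
  rintro x ⟨⟨hfx, hxC⟩, -, hxZ⟩
  obtain ⟨a, rfl⟩ := Submodule.mem_span_singleton.mp (hCZ ⟨hxC, hxZ⟩)
  have ha : a * f E = 0 := by simpa using hfx
  simp [(mul_eq_zero.mp ha).resolve_right hE]

theorem ker_inf_sup_ker_inf_eq_ker (hEC : E ∈ C) (hEZ : E ∈ Z) (hCZ : C ⊔ Z = ⊤)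
    (hE : f E ≠ 0) : LinearMap.ker f ⊓ C ⊔ (LinearMap.ker f ⊓ Z) = LinearMap.ker f := by
  refine le_antisymm (sup_le inf_le_left inf_le_left) fun x hx => ?_
  obtain ⟨c, hc, z, hz, rfl⟩ := Submodule.mem_sup.mp (hCZ ▸ Submodule.mem_top : x ∈ C ⊔ Z)
  -- shift the multiple of `E` that makes `c` lie in `ker f` over to `z`
  set a := f c / f E
  have hc' : f (c - a • E) = 0 := by simp [a, hE]
  have hz' : f (z + a • E) = 0 := by
    have : f c + f z = 0 := by simpa using hx
    simp [a, hE]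
    linear_combination this
  rw [show c + z = (c - a • E) + (z + a • E) by abel]
  exact Submodule.add_mem_sup ⟨hc', C.sub_mem hc (C.smul_mem a hEC)⟩
    ⟨hz', Z.add_mem hz (Z.smul_mem a hEZ)⟩

end TraceCorrection

section Conormal

variable {ι κ K : Type*} [Fintype ι] [Fintype κ] [Field K]

variable (ι K) in
def tracelessSubmodule : Submodule K (Matrix ι ι K) :=
  LinearMap.ker (Matrix.traceLinearMap ι K K)

def centralizerSubmodule (e : Matrix ι ι K) : Submodule K (Matrix ι ι K) :=
  LinearMap.ker (LinearMap.mulLeft K e - LinearMap.mulRight K e)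

theorem mem_centralizerSubmodule {e x : Matrix ι ι K} :
    x ∈ centralizerSubmodule e ↔ Commute e x := by
  simp [centralizerSubmodule, sub_eq_zero, Commute, SemiconjBy]

def IsConormal (e : Matrix ι ι K) : Prop :=
  ∃ 𝔰 : Submodule K (Matrix ι ι K), 𝔰 ≤ tracelessSubmodule ι K ∧
    (∀ x ∈ 𝔰, ∀ y ∈ 𝔰, x * y - y * x ∈ 𝔰) ∧
    tracelessSubmodule ι K ⊓ centralizerSubmodule e ⊓ 𝔰 = ⊥ ∧
    tracelessSubmodule ι K ⊓ centralizerSubmodule e ⊔ 𝔰 = tracelessSubmodule ι K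

theorem trace_submatrix_equiv (σ : κ ≃ ι) (M : Matrix ι ι K) :
    (M.submatrix σ σ).trace = M.trace :=
  Equiv.sum_comp σ fun i => M i i

theorem commute_reindex_iff (σ : ι ≃ κ) {a b : Matrix ι ι K} :
    Commute (reindex σ σ a) (reindex σ σ b) ↔ Commute a b := by
  rw [Commute, SemiconjBy, Commute, SemiconjBy, ← (reindex (α := K) σ σ).injective.eq_iff]
  simp only [reindex_apply, submatrix_mul_equiv]

theorem map_reindex_tracelessSubmodule (σ : ι ≃ κ) :
    (tracelessSubmodule ι K).map (reindexLinearEquiv K K σ σ).toLinearMap =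
      tracelessSubmodule κ K := by
  ext x
  simp [Submodule.map_equiv_eq_comap_symm, tracelessSubmodule, trace_submatrix_equiv]

theorem map_reindex_centralizerSubmodule (σ : ι ≃ κ) (e : Matrix ι ι K) :
    (centralizerSubmodule e).map (reindexLinearEquiv K K σ σ).toLinearMap =
      centralizerSubmodule (reindex σ σ e) := by
  ext x
  rw [Submodule.map_equiv_eq_comap_symm, Submodule.mem_comap, mem_centralizerSubmodule,
    mem_centralizerSubmodule, ← commute_reindex_iff σ]
  simp

theorem IsConormal.reindex {e : Matrix ι ι K} (h : IsConormal e) (σ : ι ≃ κ) :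
    IsConormal (reindex σ σ e) := by
  obtain ⟨𝔰, h𝔰, hlie, hinf, hsup⟩ := h
  set L : Matrix ι ι K ≃ₗ[K] Matrix κ κ K := reindexLinearEquiv K K σ σ
  have hL : Function.Injective L := L.injective
  refine ⟨𝔰.map L.toLinearMap, ?_, ?_, ?_, ?_⟩
  · rw [← map_reindex_tracelessSubmodule σ]
    exact Submodule.map_mono h𝔰
  · rintro _ ⟨x, hx, rfl⟩ _ ⟨y, hy, rfl⟩
    refine ⟨x * y - y * x, hlie x hx y hy, ?_⟩
    simp [L, reindex_apply, submatrix_mul_equiv, submatrix_sub]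
  · rw [← map_reindex_tracelessSubmodule σ, ← map_reindex_centralizerSubmodule σ,
      ← Submodule.map_inf _ hL, ← Submodule.map_inf _ hL, hinf, Submodule.map_bot]
  · rw [← map_reindex_tracelessSubmodule σ, ← map_reindex_centralizerSubmodule σ,
      ← Submodule.map_inf _ hL, ← Submodule.map_sup, hsup]

end Conormal

section SupportedOn

variable {ι R : Type*} [Fintype ι] [Semiring R]

def Matrix.supportedOn (r : ι → ι → Prop) : Submodule R (Matrix ι ι R) where
  carrier := {x | ∀ i j, ¬ r i j → x i j = 0}
  add_mem' hx hy i j h := by simp [hx i j h, hy i j h]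
  zero_mem' _ _ _ := rfl
  smul_mem' c x hx i j h := by simp [hx i j h]

theorem Matrix.mul_mem_supportedOn {r : ι → ι → Prop} [IsTrans ι r]
    {x y : Matrix ι ι R} (hx : x ∈ supportedOn r) (hy : y ∈ supportedOn r) :
    x * y ∈ supportedOn r := by
  intro i j hij
  refine Finset.sum_eq_zero fun k _ => show x i k * y k j = 0 from ?_
  by_cases hik : r i k
  · rw [hy k j fun hkj => hij (_root_.trans hik hkj), mul_zero]
  · rw [hx i k hik, zero_mul]

end SupportedOn

section BlockShift

variable {s : ℕ} (p : Fin s → ℕ) {R : Type*} [Ring R]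

abbrev BlockIndex := Σ b : Fin s, Fin (p b)

abbrev BlockMatrix (R : Type*) := Matrix (BlockIndex p) (BlockIndex p) R

theorem BlockIndex.mk_eq_mk_iff {b c : Fin s} {i : Fin (p b)} {j : Fin (p c)} :
    (⟨b, i⟩ : BlockIndex p) = ⟨c, j⟩ ↔ b = c ∧ (i : ℕ) = j := by
  rw [Sigma.mk.inj_iff]
  exact and_congr_right fun h => Fin.heq_ext_iff (congrArg p h)

def blockShift : BlockMatrix p R :=
  fun I J => if I.1 = J.1 ∧ (J.2 : ℕ) = I.2 + 1 then 1 else 0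

variable {p}

theorem mul_blockShift_apply_zero (x : BlockMatrix p R) (I : BlockIndex p)
    {c : Fin s} (hc : 0 < p c) : (x * blockShift p : BlockMatrix p R) I ⟨c, ⟨0, hc⟩⟩ = 0 :=
  Finset.sum_eq_zero fun K _ => by simp [blockShift]

theorem mul_blockShift_apply_succ (x : BlockMatrix p R) (I : BlockIndex p)
    {c : Fin s} {j : ℕ} (hj : j + 1 < p c) :
    (x * blockShift p : BlockMatrix p R) I ⟨c, ⟨j + 1, hj⟩⟩ = x I ⟨c, ⟨j, by omega⟩⟩ := by
  rw [mul_apply, Finset.sum_eq_single ⟨c, ⟨j, by omega⟩⟩]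
  · simp [blockShift]
  · rintro ⟨d, k⟩ - hne
    simp only [blockShift, mul_ite, mul_one, mul_zero, ite_eq_right_iff, and_imp]
    rintro rfl hk
    exact absurd ((BlockIndex.mk_eq_mk_iff p).mpr ⟨rfl, by simp only at hk ⊢; omega⟩) hne
  · simp

theorem blockShift_mul_apply_of_lt (x : BlockMatrix p R) {b : Fin s}
    {i : ℕ} (hi : i + 1 < p b) (J : BlockIndex p) :
    (blockShift p * x : BlockMatrix p R) ⟨b, ⟨i, by omega⟩⟩ J = x ⟨b, ⟨i + 1, hi⟩⟩ J := by
  rw [mul_apply, Finset.sum_eq_single ⟨b, ⟨i + 1, hi⟩⟩]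
  · simp [blockShift]
  · rintro ⟨d, k⟩ - hne
    simp only [blockShift, ite_mul, one_mul, zero_mul, ite_eq_right_iff, and_imp]
    rintro rfl hk
    exact absurd ((BlockIndex.mk_eq_mk_iff p).mpr ⟨rfl, hk⟩) hne
  · simp

theorem blockShift_mul_apply_of_le (x : BlockMatrix p R) {b : Fin s}
    {i : ℕ} (hi : i < p b) (hlast : p b ≤ i + 1) (J : BlockIndex p) :
    (blockShift p * x : BlockMatrix p R) ⟨b, ⟨i, hi⟩⟩ J = 0 := by
  refine Finset.sum_eq_zero fun ⟨d, k⟩ _ => ?_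
  simp only [blockShift, ite_mul, one_mul, zero_mul, ite_eq_right_iff, and_imp]
  rintro rfl hk
  have := k.2
  omega

section Centralizer

variable {x : BlockMatrix p R} (hx : Commute (blockShift p) x)
include hx

theorem apply_succ_zero_of_commute_blockShift {b c : Fin s} {i : ℕ} (hi : i + 1 < p b)
    (hc : 0 < p c) :
    x ⟨b, ⟨i + 1, hi⟩⟩ ⟨c, ⟨0, hc⟩⟩ = 0 := by
  rw [← blockShift_mul_apply_of_lt x hi, hx.eq, mul_blockShift_apply_zero]

theorem apply_succ_succ_of_commute_blockShift {b c : Fin s} {i j : ℕ} (hi : i + 1 < p b)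
    (hj : j + 1 < p c) :
    x ⟨b, ⟨i + 1, hi⟩⟩ ⟨c, ⟨j + 1, hj⟩⟩ = x ⟨b, ⟨i, by omega⟩⟩ ⟨c, ⟨j, by omega⟩⟩ := by
  rw [← blockShift_mul_apply_of_lt x hi, hx.eq, mul_blockShift_apply_succ]

theorem apply_of_commute_blockShift_of_le {b c : Fin s} {i j : ℕ} (hi : i < p b)
    (hlast : p b ≤ i + 1) (hj : j + 1 < p c) : x ⟨b, ⟨i, hi⟩⟩ ⟨c, ⟨j, by omega⟩⟩ = 0 := by
  rw [← mul_blockShift_apply_succ x _ hj, ← hx.eq, blockShift_mul_apply_of_le x hi hlast]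

theorem apply_zero_zero_of_commute_blockShift_of_lt {b c : Fin s} (hbc : p b < p c) (hb : 0 < p b) :
    x ⟨b, ⟨0, hb⟩⟩ ⟨c, ⟨0, by omega⟩⟩ = 0 := by
  have along_diagonal (k : ℕ) (hk : k < p b) :
      x ⟨b, ⟨0, hb⟩⟩ ⟨c, ⟨0, by omega⟩⟩ = x ⟨b, ⟨k, hk⟩⟩ ⟨c, ⟨k, by omega⟩⟩ := by
    induction k with
    | zero => rfl
    | succ k ih => rw [apply_succ_succ_of_commute_blockShift hx hk (by omega), ih (by omega)]
  rw [along_diagonal (p b - 1) (by omega),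
    apply_of_commute_blockShift_of_le hx _ (by omega) (by omega)]

end Centralizer

variable (p) in
/-- A block of a matrix commuting with `blockShift p` is an upper triangular Toeplitz matrix,
determined by its first row, whose entry `0` vanishes when the block is wider than tall;
this is the matrix built in this way from the first rows of `x`. -/
def toeplitzOfFirstRows (x : BlockMatrix p R) : BlockMatrix p R :=
  fun I J => if (I.2 : ℕ) ≤ J.2 ∧ (p J.1 ≤ p I.1 ∨ (I.2 : ℕ) < J.2) then
    x ⟨I.1, ⟨0, I.2.pos⟩⟩ ⟨J.1, ⟨J.2 - I.2, by omega⟩⟩ else 0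

theorem toeplitzOfFirstRows_apply_zero (x : BlockMatrix p R) {b : Fin s} (hb : 0 < p b)
    (J : BlockIndex p) : toeplitzOfFirstRows p x ⟨b, ⟨0, hb⟩⟩ J =
      if p J.1 ≤ p b ∨ 0 < (J.2 : ℕ) then x ⟨b, ⟨0, hb⟩⟩ J else 0 := by
  simp [toeplitzOfFirstRows]

theorem toeplitzOfFirstRows_apply_succ_zero (x : BlockMatrix p R) {b c : Fin s} {i : ℕ}
    (hi : i + 1 < p b) (hc : 0 < p c) :
    toeplitzOfFirstRows p x ⟨b, ⟨i + 1, hi⟩⟩ ⟨c, ⟨0, hc⟩⟩ = 0 := by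
  simp [toeplitzOfFirstRows]

theorem toeplitzOfFirstRows_apply_succ_succ (x : BlockMatrix p R) {b c : Fin s} {i j : ℕ}
    (hi : i + 1 < p b) (hj : j + 1 < p c) :
    toeplitzOfFirstRows p x ⟨b, ⟨i + 1, hi⟩⟩ ⟨c, ⟨j + 1, hj⟩⟩ =
      toeplitzOfFirstRows p x ⟨b, ⟨i, by omega⟩⟩ ⟨c, ⟨j, by omega⟩⟩ := by
  simp [toeplitzOfFirstRows]

theorem toeplitzOfFirstRows_eq_of_commute {x : BlockMatrix p R}
    (hx : Commute (blockShift p) x) : toeplitzOfFirstRows p x = x := by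
  ext ⟨b, ⟨i, hi⟩⟩ ⟨c, ⟨j, hj⟩⟩
  induction i generalizing j with
  | zero =>
    rw [toeplitzOfFirstRows_apply_zero]
    split_ifs with h
    · rfl
    · simp only [not_or, not_le, not_lt, Nat.le_zero] at h
      obtain ⟨hbc, rfl⟩ := h
      exact (apply_zero_zero_of_commute_blockShift_of_lt hx hbc hi).symm
  | succ i ih =>
    cases j with
    | zero => rw [toeplitzOfFirstRows_apply_succ_zero, apply_succ_zero_of_commute_blockShift hx]
    | succ j =>
      rw [toeplitzOfFirstRows_apply_succ_succ, ih, apply_succ_succ_of_commute_blockShift hx]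

theorem commute_toeplitzOfFirstRows (hbal : ∀ b c : Fin s, p b ≤ p c + 1) (x : BlockMatrix p R) :
    Commute (blockShift p) (toeplitzOfFirstRows p x) := by
  ext ⟨b, ⟨i, hi⟩⟩ ⟨c, ⟨j, hj⟩⟩
  by_cases hlast : p b ≤ i + 1
  · rw [blockShift_mul_apply_of_le _ hi hlast]
    cases j with
    | zero => rw [mul_blockShift_apply_zero]
    | succ j =>
      -- balance gives `j ≤ i`, with equality only in a block wider than tall
      have := hbal c b
      rw [mul_blockShift_apply_succ]
      simp only [toeplitzOfFirstRows]
      rw [if_neg (by omega)]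
  · rw [blockShift_mul_apply_of_lt _ (by omega)]
    cases j with
    | zero => rw [mul_blockShift_apply_zero, toeplitzOfFirstRows_apply_succ_zero]
    | succ j => rw [mul_blockShift_apply_succ, toeplitzOfFirstRows_apply_succ_succ]

variable (p) in
/-- The entries outside this relation are the free coordinates of the centralizer of
`blockShift p`, except the diagonal entry at `(b₀, 0)`, which is kept to absorb the trace. -/
def complementSupport (b₀ : Fin s) (I J : BlockIndex p) : Prop :=
  0 < (I.2 : ℕ) ∨ ((J.2 : ℕ) = 0 ∧ (p I.1 < p J.1 ∨ I.1 = b₀ ∧ J.1 = b₀))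

instance (b₀ : Fin s) : IsTrans (BlockIndex p) (complementSupport p b₀) where
  trans I K J hIK hKJ := by
    rcases hIK with hI | ⟨hK, hIK⟩
    · exact Or.inl hI
    rcases hKJ with hK' | ⟨hJ, hKJ⟩
    · omega
    refine Or.inr ⟨hJ, ?_⟩
    rcases hIK with hIK | ⟨hI, hK⟩ <;> rcases hKJ with hKJ | ⟨hK', hJ⟩
    · exact Or.inl (hIK.trans hKJ)
    · exact Or.inl (by rwa [hJ, ← hK'])
    · exact Or.inl (by rwa [hI, ← hK])
    · exact Or.inr ⟨hI, hJ⟩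

variable (p) in
def blockIndicator (b₀ : Fin s) : BlockMatrix p R :=
  diagonal fun I => if I.1 = b₀ then 1 else 0

theorem trace_blockIndicator (b₀ : Fin s) :
    (blockIndicator p b₀ : BlockMatrix p R).trace = p b₀ := by
  rw [blockIndicator, trace_diagonal, Fintype.sum_sigma]
  simp [apply_ite]

theorem commute_blockIndicator (b₀ : Fin s) :
    Commute (blockShift p) (blockIndicator p b₀ : BlockMatrix p R) := by
  ext I J
  simp only [blockIndicator, blockShift, mul_diagonal, diagonal_mul]
  split_ifs <;> simp_all

theorem blockIndicator_mem_supportedOn (b₀ : Fin s) :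
    (blockIndicator p b₀ : BlockMatrix p R) ∈ supportedOn (complementSupport p b₀) := by
  rintro ⟨b, i⟩ ⟨c, j⟩ hIJ
  simp only [blockIndicator, diagonal_apply, BlockIndex.mk_eq_mk_iff]
  split_ifs with h hb <;> simp_all [complementSupport]

theorem toeplitzOfFirstRows_eq_smul_blockIndicator {b₀ : Fin s} (hb₀ : 0 < p b₀)
    {x : BlockMatrix p R} (hx : x ∈ supportedOn (complementSupport p b₀)) :
    toeplitzOfFirstRows p x = x ⟨b₀, ⟨0, hb₀⟩⟩ ⟨b₀, ⟨0, hb₀⟩⟩ • blockIndicator p b₀ := by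
  ext ⟨b, ⟨i, hi⟩⟩ ⟨c, ⟨j, hj⟩⟩
  by_cases h : b = b₀ ∧ c = b₀ ∧ i = j
  · obtain ⟨rfl, rfl, rfl⟩ := h
    simp [toeplitzOfFirstRows, blockIndicator]
  have hI : (blockIndicator p b₀ : BlockMatrix p R) ⟨b, ⟨i, hi⟩⟩ ⟨c, ⟨j, hj⟩⟩ = 0 := by
    simp only [blockIndicator, diagonal_apply, BlockIndex.mk_eq_mk_iff]
    split_ifs with hbc hb <;> simp_all
  rw [Matrix.smul_apply, hI, smul_zero, toeplitzOfFirstRows]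
  split_ifs with hij
  · refine hx _ _ fun hsupp => ?_
    simp only [complementSupport, lt_self_iff_false, false_or] at hsupp hij
    omega
  · rfl

theorem sub_toeplitzOfFirstRows_mem_supportedOn (b₀ : Fin s) (x : BlockMatrix p R) :
    x - toeplitzOfFirstRows p x ∈ supportedOn (complementSupport p b₀) := by
  rintro ⟨b, ⟨i, hi⟩⟩ ⟨c, ⟨j, hj⟩⟩ hIJ
  simp only [complementSupport, not_or, not_lt, Nat.le_zero, not_and] at hIJ
  obtain ⟨rfl, hJ⟩ := hIJ
  rw [Matrix.sub_apply, toeplitzOfFirstRows_apply_zero, if_pos, sub_self]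
  rcases Nat.eq_zero_or_pos j with rfl | hj0
  · exact Or.inl (hJ rfl).1
  · exact Or.inr hj0

end BlockShift

theorem isConormal_blockShift {s : ℕ} {p : Fin s → ℕ} {K : Type*} [Field K] [CharZero K]
    (hbal : ∀ b c : Fin s, p b ≤ p c + 1) {b₀ : Fin s} (hb₀ : 0 < p b₀) :
    IsConormal (blockShift p : BlockMatrix p K) := by
  set C := centralizerSubmodule (blockShift p : BlockMatrix p K)
  set Z : Submodule K (BlockMatrix p K) := supportedOn (complementSupport p b₀)
  set E : BlockMatrix p K := blockIndicator p b₀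
  have hEC : E ∈ C := mem_centralizerSubmodule.mpr (commute_blockIndicator b₀)
  have hEZ : E ∈ Z := blockIndicator_mem_supportedOn b₀
  have htrE : traceLinearMap _ K K E ≠ 0 := by
    simpa [E, trace_blockIndicator] using hb₀.ne'
  have hCZ : C ⊓ Z ≤ K ∙ E := by
    rintro x ⟨hxC, hxZ⟩
    rw [← toeplitzOfFirstRows_eq_of_commute (mem_centralizerSubmodule.mp hxC),
      toeplitzOfFirstRows_eq_smul_blockIndicator hb₀ hxZ]
    exact Submodule.smul_mem _ _ (Submodule.mem_span_singleton_self E)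
  have hspan : C ⊔ Z = ⊤ := by
    refine eq_top_iff.mpr fun x _ => ?_
    rw [← add_sub_cancel (toeplitzOfFirstRows p x) x]
    exact Submodule.add_mem_sup
      (mem_centralizerSubmodule.mpr (commute_toeplitzOfFirstRows hbal x))
      (sub_toeplitzOfFirstRows_mem_supportedOn b₀ x)
  refine ⟨tracelessSubmodule _ K ⊓ Z, inf_le_left, ?_,
    ker_inf_inf_ker_inf_eq_bot _ hCZ htrE, ker_inf_sup_ker_inf_eq_ker _ hEC hEZ hspan htrE⟩
  rintro x ⟨hx, hxZ⟩ y ⟨hy, hyZ⟩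
  refine ⟨?_, Z.sub_mem (mul_mem_supportedOn hxZ hyZ) (mul_mem_supportedOn hyZ hxZ)⟩
  simp [tracelessSubmodule, trace_mul_comm x y]

section PartitionIndex

variable {s : ℕ} (p : Fin s → ℕ)

def blockStart (b : Fin s) : ℕ :=
  ∑ u ∈ univ.filter (fun u : Fin s => (u : ℕ) < b), p u

variable {p}

theorem blockStart_mono {b c : Fin s} (h : b ≤ c) : blockStart p b ≤ blockStart p c :=
  Finset.sum_le_sum_of_subset fun u hu => by
    simp only [mem_filter, mem_univ, true_and] at hu ⊢
    exact hu.trans_le h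

theorem blockStart_add_le {b c : Fin s} (h : b < c) : blockStart p b + p b ≤ blockStart p c := by
  have hsub : insert b (univ.filter fun u : Fin s => (u : ℕ) < b) ⊆
      univ.filter fun u : Fin s => (u : ℕ) < c := by
    intro u hu
    simp only [mem_insert, mem_filter, mem_univ, true_and] at hu ⊢
    rcases hu with rfl | hu
    exacts [h, hu.trans h]
  calc blockStart p b + p b = ∑ u ∈ insert b (univ.filter fun u : Fin s => (u : ℕ) < b), p u := by
        rw [sum_insert (by simp), add_comm]; rfl
    _ ≤ blockStart p c := sum_le_sum_of_subset hsub

theorem blockStart_add_ne {b : Fin s} {i : ℕ} (hi0 : 0 < i) (hi : i < p b) (t : Fin s) :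
    blockStart p b + i ≠ blockStart p t := by
  rcases le_or_gt t b with htb | hbt
  · have := blockStart_mono (p := p) htb
    omega
  · have := blockStart_add_le (p := p) hbt
    omega

theorem sum_castLE_eq_blockStart (b : Fin s) :
    ∑ i : Fin b, p (Fin.castLE b.2.le i) = blockStart p b := by
  have : univ.map (Fin.castLEEmb b.2.le) = univ.filter (fun u : Fin s => (u : ℕ) < b) := by
    ext u
    simp only [mem_map, mem_univ, true_and, mem_filter, Fin.castLEEmb_apply]
    exact ⟨fun ⟨i, hi⟩ => hi ▸ i.2, fun h => ⟨⟨u, h⟩, rfl⟩⟩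
  rw [blockStart, ← this, sum_map]
  rfl

variable {n : ℕ}

variable (p) in
def blockIndexEquiv (hsum : ∑ u, p u = n) : BlockIndex p ≃ Fin n :=
  finSigmaFinEquiv.trans (finCongr hsum)

theorem blockIndexEquiv_val (hsum : ∑ u, p u = n) (I : BlockIndex p) :
    (blockIndexEquiv p hsum I : ℕ) = blockStart p I.1 + I.2 := by
  simp [blockIndexEquiv, sum_castLE_eq_blockStart]

theorem blockIndexEquiv_superdiagonal_iff (hsum : ∑ u, p u = n) {I J : BlockIndex p} :
    ((blockIndexEquiv p hsum J : ℕ) = blockIndexEquiv p hsum I + 1 ∧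
      ∀ t, (blockIndexEquiv p hsum J : ℕ) ≠ blockStart p t) ↔
      I.1 = J.1 ∧ (J.2 : ℕ) = I.2 + 1 := by
  obtain ⟨b, i⟩ := I
  obtain ⟨c, ⟨j, hj⟩⟩ := J
  simp only [blockIndexEquiv_val]
  constructor
  · rintro ⟨hsucc, hstart⟩
    obtain ⟨j, rfl⟩ : ∃ j', j = j' + 1 := Nat.exists_eq_add_one.mpr
      (Nat.pos_of_ne_zero fun h => hstart c (by simp [h]))
    have := (blockIndexEquiv p hsum).injective (a₁ := ⟨c, ⟨j, by omega⟩⟩) (a₂ := ⟨b, i⟩)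
      (Fin.ext (by simp only [blockIndexEquiv_val]; omega))
    obtain ⟨rfl, hji⟩ := (BlockIndex.mk_eq_mk_iff p).mp this
    exact ⟨rfl, by simp only at hji ⊢; omega⟩
  · rintro ⟨rfl, h⟩
    exact ⟨by omega, blockStart_add_ne (by omega) hj⟩

theorem jordanOfPartition_eq_reindex (hsum : ∑ u, p u = n) :
    jordanOfPartition s p = reindex (blockIndexEquiv p hsum) (blockIndexEquiv p hsum)
      (blockShift p) := by
  ext i j
  obtain ⟨I, rfl⟩ := (blockIndexEquiv p hsum).surjective i
  obtain ⟨J, rfl⟩ := (blockIndexEquiv p hsum).surjective j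
  rw [reindex_apply, submatrix_apply, Equiv.symm_apply_apply, Equiv.symm_apply_apply]
  exact if_congr (blockIndexEquiv_superdiagonal_iff hsum) rfl rfl

end PartitionIndex

theorem balanced_partition_orbit_is_conormal_general
    (n s : ℕ) (hn : 2 ≤ n) (p : Fin s → ℕ)
    (hsum : ∑ u, p u = n)
    (hbal : ∀ i j : Fin s, p i ≤ p j + 1)
    (e : Matrix (Fin n) (Fin n) ℂ) (hE : e = jordanOfPartition s p)
    (ge : Submodule ℂ (Matrix (Fin n) (Fin n) ℂ))
    (hge : ge = slSubmodule n ⊓ commSubmodule e) :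
    ∃ 𝔰 : Submodule ℂ (Matrix (Fin n) (Fin n) ℂ),
      𝔰 ≤ slSubmodule n ∧
      (∀ x ∈ 𝔰, ∀ y ∈ 𝔰, x * y - y * x ∈ 𝔰) ∧
      ge ⊓ 𝔰 = ⊥ ∧ ge ⊔ 𝔰 = slSubmodule n := by
  subst hE hge
  obtain ⟨b₀, -, hb₀⟩ := exists_ne_zero_of_sum_ne_zero (by omega : ∑ u, p u ≠ 0)
  rw [jordanOfPartition_eq_reindex hsum]
  exact (isConormal_blockShift hbal (Nat.pos_of_ne_zero hb₀)).reindex _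

/-- Let (p₁ ≥ … ≥ p_s ≥ 1) be a partition of n ≥ 2 with |p_i − p_j| ≤ 1, and let e be the
block-diagonal nilpotent matrix of Jordan type (p₁,…,p_s).  Then the centralizer 𝔤^e of e
in sl(n,ℂ) admits a vector-space complement in sl(n,ℂ) that is a Lie subalgebra:
the orbit is conormal. -/
theorem balanced_partition_orbit_is_conormal
    (n s : ℕ) (hn : 2 ≤ n) (p : Fin s → ℕ)
    (hmono : ∀ i j : Fin s, i ≤ j → p j ≤ p i)
    (hpos : ∀ i, 1 ≤ p i)
    (hsum : ∑ u, p u = n)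
    (hbal : ∀ i j : Fin s, p i ≤ p j + 1)
    (e : Matrix (Fin n) (Fin n) ℂ) (hE : e = jordanOfPartition s p)
    (ge : Submodule ℂ (Matrix (Fin n) (Fin n) ℂ))
    (hge : ge = slSubmodule n ⊓ commSubmodule e) :
    ∃ 𝔰 : Submodule ℂ (Matrix (Fin n) (Fin n) ℂ),
      𝔰 ≤ slSubmodule n ∧
      (∀ x ∈ 𝔰, ∀ y ∈ 𝔰, x * y - y * x ∈ 𝔰) ∧
      ge ⊓ 𝔰 = ⊥ ∧ ge ⊔ 𝔰 = slSubmodule n :=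
  balanced_partition_orbit_is_conormal_general n s hn p hsum hbal e hE ge hge
end

section
/- Let a ≥ 1 and b ≥ 0 be integers, n = 2a + b ≥ 2, and let e ∈ sl(n,ℂ) be the block-diagonal nilpotent matrix with a Jordan blocks of size 2 and b Jordan blocks of size 1 (i.e. of Jordan type (2^a,1^b)). Then there exists a Lie subalgebra 𝔰 of sl(n,ℂ) such that sl(n,ℂ) = 𝔤^e ⊕ 𝔰 as vector spaces, where 𝔤^e = {x ∈ sl(n,ℂ) : x·e − e·x = 0}. (Thus every spherical nilpotent orbit of sl(n,ℂ) is conormal.) -/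
open Module

/-- The block-diagonal nilpotent matrix of Jordan type (2^a,1^b): a Jordan blocks of
size 2 followed by b Jordan blocks of size 1. -/
noncomputable def jordanTwoOne {n : ℕ} (a : ℕ) : Matrix (Fin n) (Fin n) ℂ :=
  fun i j => if ((i : ℕ) % 2 = 0 ∧ (i : ℕ) < 2 * a ∧ (j : ℕ) = (i : ℕ) + 1) then 1 else 0

namespace Conormal

def rk (a i : ℕ) : ℕ := if i < 2*a then (if i % 2 = 0 then a - i/2 else a + 2 + i/2) else a+1
lemma rk_T {a i : ℕ} (h0 : i % 2 = 0) (h1 : i < 2*a) : rk a i = a - i/2 := by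
  unfold rk; rw [if_pos h1, if_pos h0]
lemma rk_B {a i : ℕ} (h0 : i % 2 = 1) (h1 : i < 2*a) : rk a i = a + 2 + i/2 := by
  unfold rk; rw [if_pos h1, if_neg (by omega)]
lemma rk_S {a i : ℕ} (h : 2*a ≤ i) : rk a i = a + 1 := by
  unfold rk; rw [if_neg (by omega)]
def Forb (a i j : ℕ) : Prop := rk a i < rk a j ∨ (2*a ≤ i ∧ 2*a ≤ j)
lemma rk_inj {a i k : ℕ} (hi : i < 2*a) (h : rk a k = rk a i) : k = i := by
  unfold rk at h; split_ifs at h <;> omega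
lemma tri (a m : ℕ) : (m % 2 = 0 ∧ m < 2*a) ∨ (m % 2 = 1 ∧ m < 2*a) ∨ 2*a ≤ m := by omega

variable {n : ℕ}

def C1 (a : ℕ) (x : Matrix (Fin n) (Fin n) ℂ) : Prop :=
  ∀ i j : Fin n, Forb a (i : ℕ) (j : ℕ) → x i j = 0

def C2 (a : ℕ) (x : Matrix (Fin n) (Fin n) ℂ) : Prop :=
  ∀ i j : Fin n, (i : ℕ) % 2 = 0 → (i : ℕ) < 2*a → (j : ℕ) = (i : ℕ) + 1 → x j j = - x i i

noncomputable def sSub (a n : ℕ) : Submodule ℂ (Matrix (Fin n) (Fin n) ℂ) where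
  carrier := {x | C1 a x ∧ C2 a x}
  add_mem' := by
    rintro x y ⟨hx1, hx2⟩ ⟨hy1, hy2⟩
    refine ⟨fun i j h => ?_, fun i j h0 h1 h2 => ?_⟩
    · simp [Matrix.add_apply, hx1 i j h, hy1 i j h]
    · simp only [Matrix.add_apply, hx2 i j h0 h1 h2, hy2 i j h0 h1 h2]; ring
  zero_mem' := ⟨fun i j _ => rfl, fun i j _ _ _ => by simp⟩
  smul_mem' := by
    rintro c x ⟨hx1, hx2⟩
    refine ⟨fun i j h => ?_, fun i j h0 h1 h2 => ?_⟩
    · simp [Matrix.smul_apply, hx1 i j h]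
    · simp only [Matrix.smul_apply, hx2 i j h0 h1 h2, smul_eq_mul]; ring

lemma mem_sSub {a : ℕ} {x : Matrix (Fin n) (Fin n) ℂ} :
    x ∈ sSub a n ↔ C1 a x ∧ C2 a x := Iff.rfl

lemma mul_forb {a : ℕ} {x y : Matrix (Fin n) (Fin n) ℂ} (hx : C1 a x) (hy : C1 a y)
    {i j : Fin n} (h : Forb a (i : ℕ) (j : ℕ)) : (x * y) i j = 0 := by
  rw [Matrix.mul_apply]
  apply Finset.sum_eq_zero
  intro k _
  rcases h with h | ⟨hi, hj⟩
  · rcases le_or_gt (rk a (k : ℕ)) (rk a (i : ℕ)) with hk | hk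
    · rw [hy k j (Or.inl (lt_of_le_of_lt hk h)), mul_zero]
    · rw [hx i k (Or.inl hk), zero_mul]
  · rcases tri a (k : ℕ) with hk | hk | hk
    · rw [hy k j (Or.inl (by rw [rk_T hk.1 hk.2, rk_S hj]; omega)), mul_zero]
    · rw [hx i k (Or.inl (by rw [rk_S hi, rk_B hk.1 hk.2]; omega)), zero_mul]
    · rw [hx i k (Or.inr ⟨hi, hk⟩), zero_mul]

lemma mul_diag {a : ℕ} {x y : Matrix (Fin n) (Fin n) ℂ} (hx : C1 a x) (hy : C1 a y)
    {i : Fin n} (hi : (i : ℕ) < 2*a) : (x * y) i i = x i i * y i i := by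
  rw [Matrix.mul_apply]
  apply Finset.sum_eq_single_of_mem i (Finset.mem_univ i)
  intro k _ hk
  rcases lt_trichotomy (rk a (k : ℕ)) (rk a (i : ℕ)) with h | h | h
  · rw [hy k i (Or.inl h), mul_zero]
  · exact absurd (Fin.ext (rk_inj hi h)) hk
  · rw [hx i k (Or.inl h), zero_mul]

lemma e_mul_T (a : ℕ) (x : Matrix (Fin n) (Fin n) ℂ) (i j i₁ : Fin n)
    (h0 : (i : ℕ) % 2 = 0) (h1 : (i : ℕ) < 2*a) (hi₁ : (i₁ : ℕ) = (i : ℕ) + 1) :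
    ((jordanTwoOne a * x : Matrix (Fin n) (Fin n) ℂ) i j) = x i₁ j := by
  rw [Matrix.mul_apply, Finset.sum_eq_single i₁]
  · have h : jordanTwoOne (n := n) a i i₁ = 1 := by simp [jordanTwoOne, h0, h1, hi₁]
    rw [h, one_mul]
  · intro k _ hk
    have h : ¬((i : ℕ) % 2 = 0 ∧ (i : ℕ) < 2 * a ∧ (k : ℕ) = (i : ℕ) + 1) := by
      rintro ⟨-, -, h'⟩; exact hk (Fin.ext (by omega))
    simp [jordanTwoOne, h]
  · intro h; exact absurd (Finset.mem_univ i₁) h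

lemma e_mul_zero (a : ℕ) (x : Matrix (Fin n) (Fin n) ℂ) (i j : Fin n)
    (h : ¬((i : ℕ) % 2 = 0 ∧ (i : ℕ) < 2*a)) :
    ((jordanTwoOne a * x : Matrix (Fin n) (Fin n) ℂ) i j) = 0 := by
  rw [Matrix.mul_apply]
  apply Finset.sum_eq_zero
  intro k _
  have h' : ¬((i : ℕ) % 2 = 0 ∧ (i : ℕ) < 2 * a ∧ (k : ℕ) = (i : ℕ) + 1) := by
    rintro ⟨a1, a2, -⟩; exact h ⟨a1, a2⟩
  simp [jordanTwoOne, h']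

lemma mul_e_B (a : ℕ) (x : Matrix (Fin n) (Fin n) ℂ) (i j j₀ : Fin n)
    (h0 : (j : ℕ) % 2 = 1) (h1 : (j : ℕ) < 2*a) (hj₀ : (j₀ : ℕ) + 1 = (j : ℕ)) :
    ((x * jordanTwoOne a : Matrix (Fin n) (Fin n) ℂ) i j) = x i j₀ := by
  rw [Matrix.mul_apply, Finset.sum_eq_single j₀]
  · have h : jordanTwoOne (n := n) a j₀ j = 1 := by
      simp only [jordanTwoOne, if_pos (show (j₀:ℕ)%2=0 ∧ (j₀:ℕ)<2*a ∧ (j:ℕ)=(j₀:ℕ)+1 by omega)]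
    rw [h, mul_one]
  · intro k _ hk
    have h : ¬((k : ℕ) % 2 = 0 ∧ (k : ℕ) < 2 * a ∧ (j : ℕ) = (k : ℕ) + 1) := by
      rintro ⟨-, -, h'⟩; exact hk (Fin.ext (by omega))
    simp [jordanTwoOne, h]
  · intro h; exact absurd (Finset.mem_univ j₀) h

lemma mul_e_zero (a : ℕ) (x : Matrix (Fin n) (Fin n) ℂ) (i j : Fin n)
    (h : ¬((j : ℕ) % 2 = 1 ∧ (j : ℕ) < 2*a)) :
    ((x * jordanTwoOne a : Matrix (Fin n) (Fin n) ℂ) i j) = 0 := by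
  rw [Matrix.mul_apply]
  apply Finset.sum_eq_zero
  intro k _
  have h' : ¬((k : ℕ) % 2 = 0 ∧ (k : ℕ) < 2 * a ∧ (j : ℕ) = (k : ℕ) + 1) := by
    rintro ⟨a1, a2, a3⟩; exact h (by omega)
  simp [jordanTwoOne, h']


lemma pair_sum (d : ℕ → ℂ) : ∀ m : ℕ, (∀ k < m, d (2*k+1) = - d (2*k)) →
    ∑ i ∈ Finset.range (2*m), d i = 0 := by
  intro m
  induction m with
  | zero => simp
  | succ m ih =>
    intro h
    have h2 : 2*(m+1) = (2*m+1)+1 := by ring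
    rw [h2, Finset.sum_range_succ, Finset.sum_range_succ,
      ih (fun k hk => h k (by omega)), h m (by omega)]
    ring

lemma mem_sl_iff {x : Matrix (Fin n) (Fin n) ℂ} :
    x ∈ slSubmodule n ↔ ∑ i : Fin n, x i i = 0 := by
  rw [slSubmodule, LinearMap.mem_ker, Matrix.traceLinearMap_apply]
  simp [Matrix.trace, Matrix.diag]

lemma sSub_le_sl (a b : ℕ) (hn : n = 2*a + b) {x : Matrix (Fin n) (Fin n) ℂ}
    (h1 : C1 a x) (h2 : C2 a x) : x ∈ slSubmodule n := by
  rw [mem_sl_iff]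
  set d : ℕ → ℂ := fun m => if h : m < n then x ⟨m, h⟩ ⟨m, h⟩ else 0 with hd
  have e1 : ∑ i : Fin n, x i i = ∑ m ∈ Finset.range n, d m := by
    rw [← Fin.sum_univ_eq_sum_range d n]
    apply Finset.sum_congr rfl
    intro i _
    simp [hd]
  rw [e1, Finset.range_eq_Ico,
    ← Finset.sum_Ico_consecutive _ (Nat.zero_le (2*a)) (show 2*a ≤ n by omega),
    ← Finset.range_eq_Ico]
  have e2 : ∑ m ∈ Finset.Ico (2*a) n, d m = 0 := by
    apply Finset.sum_eq_zero
    intro m hm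
    rw [Finset.mem_Ico] at hm
    rw [hd]
    simp only [dif_pos hm.2]
    exact h1 ⟨m, hm.2⟩ ⟨m, hm.2⟩ (Or.inr ⟨hm.1, hm.1⟩)
  have e3 : ∑ m ∈ Finset.range (2*a), d m = 0 := by
    apply pair_sum
    intro k hk
    have hk1 : 2*k+1 < n := by omega
    have hk0 : 2*k < n := by omega
    rw [hd]
    simp only [dif_pos hk1, dif_pos hk0]
    exact h2 ⟨2*k, hk0⟩ ⟨2*k+1, hk1⟩ (by simp [Nat.mul_mod_right]) (by simp; omega) rfl
  rw [e2, e3, add_zero]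


/-- extension of a matrix to ℕ-indices by zero -/
def xv (x : Matrix (Fin n) (Fin n) ℂ) (i j : ℕ) : ℂ :=
  if h : i < n ∧ j < n then x ⟨i, h.1⟩ ⟨j, h.2⟩ else 0

lemma xv_eq (x : Matrix (Fin n) (Fin n) ℂ) {i j : ℕ} (k l : Fin n)
    (hk : i = (k : ℕ)) (hl : j = (l : ℕ)) : xv x i j = x k l := by
  subst hk; subst hl
  simp [xv]

/-- the projection of x onto the complement subalgebra -/
noncomputable def sOf (a : ℕ) (x : Matrix (Fin n) (Fin n) ℂ) : Matrix (Fin n) (Fin n) ℂ :=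
  Matrix.of fun i j =>
    if (i : ℕ) % 2 = 1 ∧ (i : ℕ) < 2*a then
      (if (j : ℕ) % 2 = 1 ∧ (j : ℕ) < 2*a then
        (if (j : ℕ) < (i : ℕ) then x i j - xv x ((i : ℕ)-1) ((j : ℕ)-1)
         else if (i : ℕ) = (j : ℕ) then (x i i - xv x ((i : ℕ)-1) ((i : ℕ)-1)) / 2
         else 0)
       else x i j)
    else if (i : ℕ) % 2 = 0 ∧ (i : ℕ) < 2*a then
      (if (j : ℕ) % 2 = 0 ∧ (j : ℕ) < 2*a then
        (if (i : ℕ) < (j : ℕ) then x i j - xv x ((i : ℕ)+1) ((j : ℕ)+1)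
         else if (i : ℕ) = (j : ℕ) then (x i i - xv x ((i : ℕ)+1) ((i : ℕ)+1)) / 2
         else 0)
       else 0)
    else
      (if (j : ℕ) % 2 = 0 ∧ (j : ℕ) < 2*a then x i j else 0)

section sOfEval

variable {a : ℕ} {x : Matrix (Fin n) (Fin n) ℂ} {i j : Fin n}

lemma sOf_B_nB (hi : (i : ℕ) % 2 = 1 ∧ (i : ℕ) < 2*a)
    (hj : ¬((j : ℕ) % 2 = 1 ∧ (j : ℕ) < 2*a)) : sOf a x i j = x i j := by
  simp only [sOf, Matrix.of_apply, if_pos hi, if_neg hj]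

lemma sOf_BB_lt (hi : (i : ℕ) % 2 = 1 ∧ (i : ℕ) < 2*a)
    (hj : (j : ℕ) % 2 = 1 ∧ (j : ℕ) < 2*a) (hlt : (j : ℕ) < (i : ℕ)) :
    sOf a x i j = x i j - xv x ((i : ℕ)-1) ((j : ℕ)-1) := by
  simp only [sOf, Matrix.of_apply, if_pos hi, if_pos hj, if_pos hlt]

lemma sOf_BB_diag (hi : (i : ℕ) % 2 = 1 ∧ (i : ℕ) < 2*a) (heq : (i : ℕ) = (j : ℕ)) :
    sOf a x i j = (x i i - xv x ((i : ℕ)-1) ((i : ℕ)-1)) / 2 := by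
  simp only [sOf, Matrix.of_apply, if_pos hi, if_pos (show (j:ℕ)%2=1 ∧ (j:ℕ)<2*a by omega),
    if_neg (show ¬((j:ℕ) < (i:ℕ)) by omega), if_pos heq]

lemma sOf_BB_gt (hi : (i : ℕ) % 2 = 1 ∧ (i : ℕ) < 2*a)
    (hj : (j : ℕ) % 2 = 1 ∧ (j : ℕ) < 2*a) (hlt : (i : ℕ) < (j : ℕ)) :
    sOf a x i j = 0 := by
  simp only [sOf, Matrix.of_apply, if_pos hi, if_pos hj,
    if_neg (show ¬((j:ℕ) < (i:ℕ)) by omega), if_neg (show ¬((i:ℕ) = (j:ℕ)) by omega)]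

lemma sOf_T_nT (hi : (i : ℕ) % 2 = 0 ∧ (i : ℕ) < 2*a)
    (hj : ¬((j : ℕ) % 2 = 0 ∧ (j : ℕ) < 2*a)) : sOf a x i j = 0 := by
  simp only [sOf, Matrix.of_apply, if_neg (show ¬((i:ℕ)%2=1 ∧ (i:ℕ)<2*a) by omega),
    if_pos hi, if_neg hj]

lemma sOf_TT_lt (hi : (i : ℕ) % 2 = 0 ∧ (i : ℕ) < 2*a)
    (hj : (j : ℕ) % 2 = 0 ∧ (j : ℕ) < 2*a) (hlt : (i : ℕ) < (j : ℕ)) :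
    sOf a x i j = x i j - xv x ((i : ℕ)+1) ((j : ℕ)+1) := by
  simp only [sOf, Matrix.of_apply, if_neg (show ¬((i:ℕ)%2=1 ∧ (i:ℕ)<2*a) by omega),
    if_pos hi, if_pos hj, if_pos hlt]

lemma sOf_TT_diag (hi : (i : ℕ) % 2 = 0 ∧ (i : ℕ) < 2*a) (heq : (i : ℕ) = (j : ℕ)) :
    sOf a x i j = (x i i - xv x ((i : ℕ)+1) ((i : ℕ)+1)) / 2 := by
  simp only [sOf, Matrix.of_apply, if_neg (show ¬((i:ℕ)%2=1 ∧ (i:ℕ)<2*a) by omega),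
    if_pos hi, if_pos (show (j:ℕ)%2=0 ∧ (j:ℕ)<2*a by omega),
    if_neg (show ¬((i:ℕ) < (j:ℕ)) by omega), if_pos heq]

lemma sOf_TT_gt (hi : (i : ℕ) % 2 = 0 ∧ (i : ℕ) < 2*a)
    (hj : (j : ℕ) % 2 = 0 ∧ (j : ℕ) < 2*a) (hlt : (j : ℕ) < (i : ℕ)) :
    sOf a x i j = 0 := by
  simp only [sOf, Matrix.of_apply, if_neg (show ¬((i:ℕ)%2=1 ∧ (i:ℕ)<2*a) by omega),
    if_pos hi, if_pos hj, if_neg (show ¬((i:ℕ) < (j:ℕ)) by omega),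
    if_neg (show ¬((i:ℕ) = (j:ℕ)) by omega)]

lemma sOf_S_T (hi : 2*a ≤ (i : ℕ)) (hj : (j : ℕ) % 2 = 0 ∧ (j : ℕ) < 2*a) :
    sOf a x i j = x i j := by
  simp only [sOf, Matrix.of_apply, if_neg (show ¬((i:ℕ)%2=1 ∧ (i:ℕ)<2*a) by omega),
    if_neg (show ¬((i:ℕ)%2=0 ∧ (i:ℕ)<2*a) by omega), if_pos hj]

lemma sOf_S_nT (hi : 2*a ≤ (i : ℕ)) (hj : ¬((j : ℕ) % 2 = 0 ∧ (j : ℕ) < 2*a)) :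
    sOf a x i j = 0 := by
  simp only [sOf, Matrix.of_apply, if_neg (show ¬((i:ℕ)%2=1 ∧ (i:ℕ)<2*a) by omega),
    if_neg (show ¬((i:ℕ)%2=0 ∧ (i:ℕ)<2*a) by omega), if_neg hj]

end sOfEval


lemma forb_iff (a i j : ℕ) : Forb a i j ↔
    ((i % 2 = 1 ∧ i < 2*a ∧ j % 2 = 1 ∧ j < 2*a ∧ i < j) ∨
     (i % 2 = 0 ∧ i < 2*a ∧ j % 2 = 0 ∧ j < 2*a ∧ j < i) ∨
     (i % 2 = 0 ∧ i < 2*a ∧ (2*a ≤ j ∨ (j % 2 = 1 ∧ j < 2*a))) ∨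
     (2*a ≤ i ∧ (2*a ≤ j ∨ (j % 2 = 1 ∧ j < 2*a)))) := by
  unfold Forb rk
  split_ifs <;> omega

lemma sOf_C1 (a : ℕ) (x : Matrix (Fin n) (Fin n) ℂ) : C1 a (sOf a x) := by
  intro i j hf
  rw [forb_iff] at hf
  rcases hf with h | h | h | h
  · exact sOf_BB_gt ⟨h.1, h.2.1⟩ ⟨h.2.2.1, h.2.2.2.1⟩ h.2.2.2.2
  · exact sOf_TT_gt ⟨h.1, h.2.1⟩ ⟨h.2.2.1, h.2.2.2.1⟩ h.2.2.2.2
  · exact sOf_T_nT ⟨h.1, h.2.1⟩ (by omega)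
  · rcases tri a (j : ℕ) with hj | hj | hj
    · exact absurd hj (by omega)
    · exact sOf_S_nT h.1 (by omega)
    · exact sOf_S_nT h.1 (by omega)

lemma sOf_C2 (a : ℕ) (x : Matrix (Fin n) (Fin n) ℂ) : C2 a (sOf a x) := by
  intro i j h0 h1 hj
  rw [sOf_BB_diag (show (j:ℕ)%2=1 ∧ (j:ℕ)<2*a by omega) rfl,
    sOf_TT_diag ⟨h0, h1⟩ rfl,
    xv_eq x i i (by omega) (by omega), xv_eq x j j (by omega) (by omega)]
  ring


lemma comm_sub (a : ℕ) (h2a : 2*a ≤ n) (x : Matrix (Fin n) (Fin n) ℂ) :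
    jordanTwoOne a * (x - sOf a x) = (x - sOf a x) * jordanTwoOne a := by
  ext i j
  by_cases hi : (i : ℕ) % 2 = 0 ∧ (i : ℕ) < 2*a
  · have hi1n : (i : ℕ) + 1 < n := by omega
    have hi₁ : ((⟨(i:ℕ)+1, hi1n⟩ : Fin n) : ℕ) = (i : ℕ) + 1 := rfl
    rw [e_mul_T a _ i j ⟨(i:ℕ)+1, hi1n⟩ hi.1 hi.2 hi₁]
    set i₁ : Fin n := ⟨(i:ℕ)+1, hi1n⟩
    by_cases hj : (j : ℕ) % 2 = 1 ∧ (j : ℕ) < 2*a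
    · have hj0n : (j : ℕ) - 1 < n := by omega
      have hj₀ : ((⟨(j:ℕ)-1, hj0n⟩ : Fin n) : ℕ) + 1 = (j : ℕ) := by
        simp only [Fin.val_mk]; omega
      rw [mul_e_B a _ i j ⟨(j:ℕ)-1, hj0n⟩ hj.1 hj.2 hj₀]
      set j₀ : Fin n := ⟨(j:ℕ)-1, hj0n⟩
      have hj₀v : (j₀ : ℕ) = (j : ℕ) - 1 := rfl
      have hb1 : (i₁ : ℕ) % 2 = 1 ∧ (i₁ : ℕ) < 2*a := by
        rw [hi₁]; omega
      have ht0 : (j₀ : ℕ) % 2 = 0 ∧ (j₀ : ℕ) < 2*a := by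
        rw [hj₀v]; omega
      rw [Matrix.sub_apply, Matrix.sub_apply]
      rcases Nat.lt_trichotomy ((i₁ : ℕ)) ((j : ℕ)) with hlt | heq | hgt
      · rw [sOf_BB_gt hb1 hj hlt, sOf_TT_lt hi ht0 (by omega),
          xv_eq x i₁ j (by omega) (by omega)]
        ring
      · have hij : i₁ = j := Fin.ext heq
        have hji : j₀ = i := Fin.ext (by omega)
        rw [sOf_BB_diag hb1 heq, sOf_TT_diag hi (by omega),
          xv_eq x i i (by omega) (by omega), xv_eq x i₁ i₁ (by omega) (by omega),
          ← hij, hji]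
        ring
      · rw [sOf_BB_lt hb1 hj hgt, sOf_TT_gt hi ht0 (by omega),
          xv_eq x i j₀ (by omega) (by omega)]
        ring
    · rw [mul_e_zero a _ i j hj, Matrix.sub_apply,
        sOf_B_nB (show (i₁:ℕ)%2=1 ∧ (i₁:ℕ)<2*a by rw [hi₁]; omega) hj]
      ring
  · rw [e_mul_zero a _ i j hi]
    by_cases hj : (j : ℕ) % 2 = 1 ∧ (j : ℕ) < 2*a
    · have hj0n : (j : ℕ) - 1 < n := by omega
      have hj₀ : ((⟨(j:ℕ)-1, hj0n⟩ : Fin n) : ℕ) + 1 = (j : ℕ) := by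
        simp only [Fin.val_mk]; omega
      rw [mul_e_B a _ i j ⟨(j:ℕ)-1, hj0n⟩ hj.1 hj.2 hj₀]
      set j₀ : Fin n := ⟨(j:ℕ)-1, hj0n⟩
      have hj₀v : (j₀ : ℕ) = (j : ℕ) - 1 := rfl
      have ht0 : (j₀ : ℕ) % 2 = 0 ∧ (j₀ : ℕ) < 2*a := by
        rw [hj₀v]; omega
      rw [Matrix.sub_apply]
      rcases tri a (i : ℕ) with hT | hB | hS
      · exact absurd hT hi
      · rw [sOf_B_nB hB (by omega)]; ring
      · rw [sOf_S_T hS ht0]; ring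
    · rw [mul_e_zero a _ i j hj]


lemma diag_zero (a : ℕ) (h2a : 2*a ≤ n) {x : Matrix (Fin n) (Fin n) ℂ}
    (key : ∀ i j : Fin n, ((jordanTwoOne a * x : Matrix (Fin n) (Fin n) ℂ) i j) =
      ((x * jordanTwoOne a : Matrix (Fin n) (Fin n) ℂ) i j))
    (h2 : C2 a x) : ∀ i : Fin n, (i : ℕ) < 2*a → x i i = 0 := by
  intro i hi
  rcases Nat.mod_two_eq_zero_or_one (i : ℕ) with hp | hp
  · -- i ∈ T
    have h1n : (i : ℕ) + 1 < n := by omega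
    set i₁ : Fin n := ⟨(i:ℕ)+1, h1n⟩ with hdef
    have hv : (i₁ : ℕ) = (i : ℕ) + 1 := rfl
    have A := key i i₁
    rw [e_mul_T a x i i₁ i₁ hp hi hv, mul_e_B a x i i₁ i (by omega) (by omega) (by omega)] at A
    have B := h2 i i₁ hp hi hv
    linear_combination (-(1/2) : ℂ) * A + (1/2 : ℂ) * B
  · -- i ∈ B
    have h0n : (i : ℕ) - 1 < n := by omega
    set i₀ : Fin n := ⟨(i:ℕ)-1, h0n⟩ with hdef
    have hv : (i₀ : ℕ) = (i : ℕ) - 1 := rfl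
    have hv' : (i : ℕ) = (i₀ : ℕ) + 1 := by omega
    have A := key i₀ i
    rw [e_mul_T a x i₀ i i (by omega) (by omega) hv',
      mul_e_B a x i₀ i i₀ hp hi (by omega)] at A
    have B := h2 i₀ i (by omega) (by omega) hv'
    linear_combination (1/2 : ℂ) * A + (1/2 : ℂ) * B

lemma eq_zero_of (a : ℕ) (h2a : 2*a ≤ n) {x : Matrix (Fin n) (Fin n) ℂ}
    (hcomm : jordanTwoOne a * x = x * jordanTwoOne a)
    (h1 : C1 a x) (h2 : C2 a x) : x = 0 := by
  have key : ∀ i j : Fin n, ((jordanTwoOne a * x : Matrix (Fin n) (Fin n) ℂ) i j) =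
      ((x * jordanTwoOne a : Matrix (Fin n) (Fin n) ℂ) i j) := by
    intro i j; rw [hcomm]
  ext i j
  rw [Matrix.zero_apply]
  rcases tri a (i : ℕ) with hiT | hiB | hiS
  · rcases tri a (j : ℕ) with hjT | hjB | hjS
    · -- TT
      rcases Nat.lt_trichotomy (i : ℕ) (j : ℕ) with h | h | h
      · -- i < j : x i j = x i₁ j₁ = 0 (forbidden BB)
        have hi1n : (i : ℕ) + 1 < n := by omega
        have hj1n : (j : ℕ) + 1 < n := by omega
        have A := key i ⟨(j:ℕ)+1, hj1n⟩
        rw [e_mul_T a x i ⟨(j:ℕ)+1, hj1n⟩ ⟨(i:ℕ)+1, hi1n⟩ hiT.1 hiT.2 rfl,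
          mul_e_B a x i ⟨(j:ℕ)+1, hj1n⟩ j (by simp; omega) (by simp; omega) rfl] at A
        rw [← A]
        exact h1 _ _ ((forb_iff a _ _).2 (by simp; omega))
      · rw [show j = i from Fin.ext h.symm]
        exact diag_zero a h2a key h2 i hiT.2
      · exact h1 i j ((forb_iff a _ _).2 (by omega))
    · exact h1 i j ((forb_iff a _ _).2 (by omega))
    · exact h1 i j ((forb_iff a _ _).2 (by omega))
  · rcases tri a (j : ℕ) with hjT | hjB | hjS
    · -- BT : from comm at (i₀, j)
      have hi0n : (i : ℕ) - 1 < n := by omega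
      have A := key ⟨(i:ℕ)-1, hi0n⟩ j
      rw [e_mul_T a x ⟨(i:ℕ)-1, hi0n⟩ j i (by simp; omega) (by simp; omega) (by simp; omega),
        mul_e_zero a x ⟨(i:ℕ)-1, hi0n⟩ j (by omega)] at A
      exact A
    · -- BB
      rcases Nat.lt_trichotomy (i : ℕ) (j : ℕ) with h | h | h
      · exact h1 i j ((forb_iff a _ _).2 (by omega))
      · rw [show j = i from Fin.ext h.symm]
        exact diag_zero a h2a key h2 i hiB.2
      · -- j < i : x i j = x i₀ j₀ = 0 (forbidden TT)
        have hi0n : (i : ℕ) - 1 < n := by omega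
        have hj0n : (j : ℕ) - 1 < n := by omega
        have A := key ⟨(i:ℕ)-1, hi0n⟩ j
        rw [e_mul_T a x ⟨(i:ℕ)-1, hi0n⟩ j i (by simp; omega) (by simp; omega) (by simp; omega),
          mul_e_B a x ⟨(i:ℕ)-1, hi0n⟩ j ⟨(j:ℕ)-1, hj0n⟩ hjB.1 hjB.2 (by simp; omega)] at A
        rw [A]
        exact h1 _ _ ((forb_iff a _ _).2 (by simp; omega))
    · -- BS : from comm at (i₀, j)
      have hi0n : (i : ℕ) - 1 < n := by omega
      have A := key ⟨(i:ℕ)-1, hi0n⟩ j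
      rw [e_mul_T a x ⟨(i:ℕ)-1, hi0n⟩ j i (by simp; omega) (by simp; omega) (by simp; omega),
        mul_e_zero a x ⟨(i:ℕ)-1, hi0n⟩ j (by omega)] at A
      exact A
  · rcases tri a (j : ℕ) with hjT | hjB | hjS
    · -- ST : from comm at (i, j₁)
      have hj1n : (j : ℕ) + 1 < n := by omega
      have A := key i ⟨(j:ℕ)+1, hj1n⟩
      rw [e_mul_zero a x i ⟨(j:ℕ)+1, hj1n⟩ (by omega),
        mul_e_B a x i ⟨(j:ℕ)+1, hj1n⟩ j (by simp; omega) (by simp; omega) rfl] at A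
      exact A.symm
    · exact h1 i j ((forb_iff a _ _).2 (by omega))
    · exact h1 i j ((forb_iff a _ _).2 (by omega))


lemma mem_comm_iff {e x : Matrix (Fin n) (Fin n) ℂ} :
    x ∈ commSubmodule e ↔ e * x = x * e := by
  rw [commSubmodule, LinearMap.mem_ker, LinearMap.sub_apply,
    LinearMap.mulLeft_apply, LinearMap.mulRight_apply, sub_eq_zero]

end Conormal


open Conormal

/-- Let a ≥ 1, b ≥ 0, n = 2a + b ≥ 2, and let e ∈ sl(n,ℂ) be the block-diagonal nilpotent
matrix of Jordan type (2^a,1^b).  Then the centralizer 𝔤^e of e in sl(n,ℂ) admits a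
vector-space complement in sl(n,ℂ) that is a Lie subalgebra: every spherical nilpotent
orbit of sl(n,ℂ) is conormal. -/
theorem spherical_orbit_is_conormal
    (a b n : ℕ) (ha : 1 ≤ a) (hn : n = 2 * a + b) (hn2 : 2 ≤ n)
    (e : Matrix (Fin n) (Fin n) ℂ) (hE : e = jordanTwoOne a)
    (ge : Submodule ℂ (Matrix (Fin n) (Fin n) ℂ))
    (hge : ge = slSubmodule n ⊓ commSubmodule e) :
    ∃ 𝔰 : Submodule ℂ (Matrix (Fin n) (Fin n) ℂ),
      𝔰 ≤ slSubmodule n ∧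
      (∀ x ∈ 𝔰, ∀ y ∈ 𝔰, x * y - y * x ∈ 𝔰) ∧
      ge ⊓ 𝔰 = ⊥ ∧ ge ⊔ 𝔰 = slSubmodule n := by
  subst hE hge
  have h2a : 2*a ≤ n := by omega
  refine ⟨sSub a n, ?_, ?_, ?_, ?_⟩
  · intro x hx
    exact sSub_le_sl a b hn hx.1 hx.2
  · intro x hx y hy
    obtain ⟨hx1, hx2⟩ := hx
    obtain ⟨hy1, hy2⟩ := hy
    refine ⟨fun i j hf => ?_, fun i j h0 h1 hj => ?_⟩
    · rw [Matrix.sub_apply, mul_forb hx1 hy1 hf, mul_forb hy1 hx1 hf, sub_zero]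
    · have hjlt : (j : ℕ) < 2*a := by omega
      rw [Matrix.sub_apply, Matrix.sub_apply, mul_diag hx1 hy1 h1, mul_diag hy1 hx1 h1,
        mul_diag hx1 hy1 hjlt, mul_diag hy1 hx1 hjlt]
      ring
  · rw [eq_bot_iff]
    intro x hx
    obtain ⟨⟨hsl, hcm⟩, hs1, hs2⟩ := hx
    rw [Submodule.mem_bot]
    exact eq_zero_of a h2a (mem_comm_iff.1 hcm) hs1 hs2
  · apply le_antisymm
    · apply sup_le inf_le_left
      intro x hx
      exact sSub_le_sl a b hn hx.1 hx.2
    · intro x hx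
      have hsmem : sOf a x ∈ sSub a n := ⟨sOf_C1 a x, sOf_C2 a x⟩
      have hssl : sOf a x ∈ slSubmodule n := sSub_le_sl a b hn (sOf_C1 a x) (sOf_C2 a x)
      have hgmem : x - sOf a x ∈ slSubmodule n ⊓ commSubmodule (jordanTwoOne a) :=
        Submodule.mem_inf.2 ⟨Submodule.sub_mem _ hx hssl, mem_comm_iff.2 (comm_sub a h2a x)⟩
      exact Submodule.mem_sup.2 ⟨x - sOf a x, hgmem, sOf a x, hsmem, sub_add_cancel x (sOf a x)⟩
end

section
/- Let n ≥ 2 and let e ∈ sl(n,ℂ) be the regular nilpotent matrix, i.e. the single nilpotent Jordan block of size n (ones in positions (i,i+1), zeros elsewhere). Then there exists a Lie subalgebra 𝔰 of sl(n,ℂ) such that sl(n,ℂ) = 𝔤^e ⊕ 𝔰 as vector spaces, where 𝔤^e = {x ∈ sl(n,ℂ) : x·e − e·x = 0}. (Thus the regular nilpotent orbit of sl(n,ℂ) is conormal.) -/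
open Module

/-- The regular nilpotent matrix: the single nilpotent Jordan block of size n,
with ones in positions (i,i+1) and zeros elsewhere. -/
noncomputable def regularNilpotent (n : ℕ) : Matrix (Fin n) (Fin n) ℂ :=
  fun i j => if (j : ℕ) = (i : ℕ) + 1 then 1 else 0

namespace ConormalAux

variable {n : ℕ}

/-- Matrices whose first row vanishes off the (0,0) entry. -/
noncomputable def rowZero (n : ℕ) : Submodule ℂ (Matrix (Fin n) (Fin n) ℂ) where
  carrier := {x | ∀ i j : Fin n, (i : ℕ) = 0 → (j : ℕ) ≠ 0 → x i j = 0}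
  add_mem' := by
    intro a b ha hb i j hi hj
    simp [Matrix.add_apply, ha i j hi hj, hb i j hi hj]
  zero_mem' := by intro i j _ _; rfl
  smul_mem' := by
    intro c a ha i j hi hj
    simp [Matrix.smul_apply, ha i j hi hj]

lemma regN_mul_apply (x : Matrix (Fin n) (Fin n) ℂ) (i j : Fin n) :
    (regularNilpotent n * x) i j =
      if h : (i : ℕ) + 1 < n then x ⟨(i : ℕ) + 1, h⟩ j else 0 := by
  rw [Matrix.mul_apply]
  simp only [regularNilpotent, ite_mul, one_mul, zero_mul]
  split_ifs with h
  · rw [Finset.sum_eq_single (⟨(i : ℕ) + 1, h⟩ : Fin n)]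
    · simp
    · intro k _ hk
      rw [if_neg]
      intro hc
      exact hk (Fin.ext hc)
    · simp
  · apply Finset.sum_eq_zero
    intro k _
    rw [if_neg]
    have := k.isLt
    omega

lemma mul_regN_apply (x : Matrix (Fin n) (Fin n) ℂ) (i j : Fin n) :
    (x * regularNilpotent n) i j =
      if (j : ℕ) = 0 then 0
      else x i ⟨(j : ℕ) - 1, Nat.lt_of_le_of_lt (Nat.sub_le _ _) j.isLt⟩ := by
  rw [Matrix.mul_apply]
  simp only [regularNilpotent, mul_ite, mul_one, mul_zero]
  split_ifs with h
  · apply Finset.sum_eq_zero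
    intro k _
    rw [if_neg]
    omega
  · rw [Finset.sum_eq_single (⟨(j : ℕ) - 1, Nat.lt_of_le_of_lt (Nat.sub_le _ _) j.isLt⟩ : Fin n)]
    · rw [if_pos]
      simp
      omega
    · intro k _ hk
      rw [if_neg]
      intro hc
      apply hk
      apply Fin.ext
      simp
      omega
    · simp

lemma comm_rel (x : Matrix (Fin n) (Fin n) ℂ)
    (hx : regularNilpotent n * x = x * regularNilpotent n) (i j : Fin n) :
    (if h : (i : ℕ) + 1 < n then x ⟨(i : ℕ) + 1, h⟩ j else 0) =
      (if (j : ℕ) = 0 then 0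
       else x i ⟨(j : ℕ) - 1, Nat.lt_of_le_of_lt (Nat.sub_le _ _) j.isLt⟩) := by
  rw [← regN_mul_apply, ← mul_regN_apply, hx]

lemma comm_lower (x : Matrix (Fin n) (Fin n) ℂ)
    (hx : regularNilpotent n * x = x * regularNilpotent n) :
    ∀ i j : Fin n, (j : ℕ) < (i : ℕ) → x i j = 0 := by
  suffices H : ∀ m : ℕ, ∀ i j : Fin n, (j : ℕ) = m → (j : ℕ) < (i : ℕ) → x i j = 0 by
    intro i j h; exact H _ i j rfl h
  intro m
  induction m with
  | zero =>
    intro i j hj hlt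
    have hi1 : ((⟨(i : ℕ) - 1, by omega⟩ : Fin n) : ℕ) + 1 < n := by
      simp only []
      have := i.isLt
      omega
    have rel := comm_rel x hx ⟨(i : ℕ) - 1, by omega⟩ j
    rw [dif_pos hi1, if_pos hj] at rel
    have : (⟨((⟨(i : ℕ) - 1, by omega⟩ : Fin n) : ℕ) + 1, hi1⟩ : Fin n) = i := by
      apply Fin.ext; simp; omega
    rwa [this] at rel
  | succ m ih =>
    intro i j hj hlt
    have hi1 : ((⟨(i : ℕ) - 1, by omega⟩ : Fin n) : ℕ) + 1 < n := by
      simp only []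
      have := i.isLt
      omega
    have rel := comm_rel x hx ⟨(i : ℕ) - 1, by omega⟩ j
    rw [dif_pos hi1, if_neg (by omega)] at rel
    have h2 : (⟨((⟨(i : ℕ) - 1, by omega⟩ : Fin n) : ℕ) + 1, hi1⟩ : Fin n) = i := by
      apply Fin.ext; simp; omega
    rw [h2] at rel
    rw [rel]
    exact ih _ _ (by first | omega | (simp; omega)) (by first | omega | (simp; omega))

lemma comm_upper (x : Matrix (Fin n) (Fin n) ℂ)
    (hx : regularNilpotent n * x = x * regularNilpotent n) (hn : 0 < n) :
    ∀ i j : Fin n, (i : ℕ) ≤ (j : ℕ) →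
      x i j = x ⟨0, hn⟩ ⟨(j : ℕ) - (i : ℕ), Nat.lt_of_le_of_lt (Nat.sub_le _ _) j.isLt⟩ := by
  suffices H : ∀ m : ℕ, ∀ i j : Fin n, (i : ℕ) = m → (i : ℕ) ≤ (j : ℕ) →
      x i j = x ⟨0, hn⟩ ⟨(j : ℕ) - (i : ℕ), Nat.lt_of_le_of_lt (Nat.sub_le _ _) j.isLt⟩ by
    intro i j h; exact H _ i j rfl h
  intro m
  induction m with
  | zero =>
    intro i j hi _
    have h1 : i = ⟨0, hn⟩ := Fin.ext hi
    rw [h1]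
    congr 1
  | succ m ih =>
    intro i j hi hij
    have hm : m < n := by have := i.isLt; omega
    have hi1 : ((⟨m, hm⟩ : Fin n) : ℕ) + 1 < n := by
      simp only []
      have := i.isLt
      omega
    have rel := comm_rel x hx ⟨m, hm⟩ j
    rw [dif_pos hi1, if_neg (by omega)] at rel
    have h2 : (⟨((⟨m, hm⟩ : Fin n) : ℕ) + 1, hi1⟩ : Fin n) = i := by
      apply Fin.ext; simp; omega
    rw [h2] at rel
    rw [rel, ih ⟨m, hm⟩ _ rfl (by first | omega | (simp; omega))]
    congr 1
    apply Fin.ext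
    simp
    omega

lemma mem_sl_iff (x : Matrix (Fin n) (Fin n) ℂ) :
    x ∈ slSubmodule n ↔ Matrix.trace x = 0 := by
  simp [slSubmodule, LinearMap.mem_ker, Matrix.traceLinearMap]

lemma mem_comm_iff (x : Matrix (Fin n) (Fin n) ℂ) :
    x ∈ commSubmodule (regularNilpotent n) ↔
      regularNilpotent n * x = x * regularNilpotent n := by
  simp only [commSubmodule, LinearMap.mem_ker, LinearMap.sub_apply,
    LinearMap.mulLeft_apply, LinearMap.mulRight_apply, sub_eq_zero]

end ConormalAux

/-- Let n ≥ 2 and let e ∈ sl(n,ℂ) be the regular nilpotent matrix.  Then the centralizer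
𝔤^e of e in sl(n,ℂ) admits a vector-space complement in sl(n,ℂ) that is a Lie
subalgebra: the regular nilpotent orbit of sl(n,ℂ) is conormal. -/
theorem regular_orbit_is_conormal
    (n : ℕ) (hn : 2 ≤ n)
    (e : Matrix (Fin n) (Fin n) ℂ) (hE : e = regularNilpotent n)
    (ge : Submodule ℂ (Matrix (Fin n) (Fin n) ℂ))
    (hge : ge = slSubmodule n ⊓ commSubmodule e) :
    ∃ 𝔰 : Submodule ℂ (Matrix (Fin n) (Fin n) ℂ),
      𝔰 ≤ slSubmodule n ∧
      (∀ x ∈ 𝔰, ∀ y ∈ 𝔰, x * y - y * x ∈ 𝔰) ∧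
      ge ⊓ 𝔰 = ⊥ ∧ ge ⊔ 𝔰 = slSubmodule n := by
  open ConormalAux in
  have hn0 : 0 < n := by omega
  subst hE hge
  refine ⟨slSubmodule n ⊓ ConormalAux.rowZero n, inf_le_left, ?_, ?_, ?_⟩
  · -- closed under commutator
    intro x hx y hy
    rw [Submodule.mem_inf] at hx hy ⊢
    obtain ⟨hx1, hx2⟩ := hx
    obtain ⟨hy1, hy2⟩ := hy
    constructor
    · rw [ConormalAux.mem_sl_iff]
      rw [Matrix.trace_sub, Matrix.trace_mul_comm, sub_self]
    · intro i j hi hj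
      have key : ∀ a b : Matrix (Fin n) (Fin n) ℂ,
          (∀ i j : Fin n, (i : ℕ) = 0 → (j : ℕ) ≠ 0 → a i j = 0) →
          (∀ i j : Fin n, (i : ℕ) = 0 → (j : ℕ) ≠ 0 → b i j = 0) →
          (a * b) i j = a i ⟨0, hn0⟩ * b ⟨0, hn0⟩ j := by
        intro a b ha hb
        have hieq : i = (⟨0, hn0⟩ : Fin n) := Fin.ext hi
        rw [Matrix.mul_apply, Finset.sum_eq_single (⟨0, hn0⟩ : Fin n), hieq]
        · intro k _ hk
          rw [ha i k hi (fun h => hk (Fin.ext h)), zero_mul]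
        · simp
      simp only [Matrix.sub_apply]
      rw [key x y hx2 hy2, key y x hy2 hx2,
        hy2 ⟨0, hn0⟩ j rfl hj, hx2 ⟨0, hn0⟩ j rfl hj, mul_zero, mul_zero, sub_zero]
  · -- trivial intersection
    rw [eq_bot_iff]
    intro x hx
    rw [Submodule.mem_inf, Submodule.mem_inf, Submodule.mem_inf] at hx
    obtain ⟨⟨hx1, hx2⟩, hx3, hx4⟩ := hx
    simp only [Submodule.mem_bot]
    have hcomm := (ConormalAux.mem_comm_iff x).mp hx2
    have hupper := ConormalAux.comm_upper x hcomm hn0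
    have hlower := ConormalAux.comm_lower x hcomm
    have hdiag : ∀ i : Fin n, x i i = x ⟨0, hn0⟩ ⟨0, hn0⟩ := by
      intro i
      rw [hupper i i le_rfl]
      congr 1
      apply Fin.ext
      simp
    have htr : Matrix.trace x = (n : ℂ) * x ⟨0, hn0⟩ ⟨0, hn0⟩ := by
      simp only [Matrix.trace, Matrix.diag]
      rw [Finset.sum_congr rfl (fun i _ => hdiag i)]
      simp [Finset.card_univ, mul_comm]
    have hxsl : Matrix.trace x = 0 := (ConormalAux.mem_sl_iff x).mp hx1
    have h00 : x ⟨0, hn0⟩ ⟨0, hn0⟩ = 0 := by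
      rw [htr] at hxsl
      have : (n : ℂ) ≠ 0 := by
        exact_mod_cast Nat.cast_ne_zero.mpr (by omega)
      exact (mul_eq_zero.mp hxsl).resolve_left this
    ext i j
    rcases lt_trichotomy (i : ℕ) (j : ℕ) with h | h | h
    · rw [hupper i j h.le]
      apply hx4
      · rfl
      · simp; omega
    · have : i = j := Fin.ext h
      subst this
      rw [hdiag i, h00]
      rfl
    · rw [hlower i j h]
      rfl
  · -- sup is sl
    apply le_antisymm
    · exact sup_le inf_le_left inf_le_left
    · intro x hx
      have hxtr : Matrix.trace x = 0 := (ConormalAux.mem_sl_iff x).mp hx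
      set g : Matrix (Fin n) (Fin n) ℂ := fun i j =>
        if h : (i : ℕ) < (j : ℕ) then
          x ⟨0, hn0⟩ ⟨(j : ℕ) - (i : ℕ), Nat.lt_of_le_of_lt (Nat.sub_le _ _) j.isLt⟩
        else 0 with hgdef
      have hgtr : Matrix.trace g = 0 := by
        simp only [Matrix.trace, Matrix.diag]
        apply Finset.sum_eq_zero
        intro i _
        show g i i = 0
        rw [hgdef]
        simp
      have hgcomm : regularNilpotent n * g = g * regularNilpotent n := by
        ext i j
        rw [ConormalAux.regN_mul_apply, ConormalAux.mul_regN_apply]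
        by_cases h1 : (i : ℕ) + 1 < n
        · rw [dif_pos h1]
          by_cases h2 : (j : ℕ) = 0
          · rw [if_pos h2, hgdef]
            simp only []
            rw [dif_neg (by first | omega | (simp; omega))]
          · rw [if_neg h2, hgdef]
            simp only []
            by_cases h3 : (i : ℕ) + 1 < (j : ℕ)
            · rw [dif_pos (by simpa using h3), dif_pos (by first | omega | (simp; omega))]
              congr 1
              apply Fin.ext
              simp
              omega
            · rw [dif_neg (by simpa using h3), dif_neg (by first | omega | (simp; omega))]
        · rw [dif_neg h1]
          have hij : i.isLt = i.isLt := rfl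
          by_cases h2 : (j : ℕ) = 0
          · rw [if_pos h2]
          · rw [if_neg h2, hgdef]
            simp only []
            rw [dif_neg]
            have := i.isLt
            have := j.isLt
            simp
            omega
      have hg : g ∈ slSubmodule n ⊓ commSubmodule (regularNilpotent n) :=
        ⟨(ConormalAux.mem_sl_iff g).mpr hgtr, (ConormalAux.mem_comm_iff g).mpr hgcomm⟩
      have hs : x - g ∈ slSubmodule n ⊓ ConormalAux.rowZero n := by
        rw [Submodule.mem_inf]
        constructor
        · rw [ConormalAux.mem_sl_iff, Matrix.trace_sub, hxtr, hgtr, sub_zero]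
        · intro i j hi hj
          have h1 : i = (⟨0, hn0⟩ : Fin n) := Fin.ext hi
          simp only [Matrix.sub_apply]
          rw [hgdef]
          simp only []
          rw [dif_pos (by omega)]
          rw [h1]
          have h2 : (⟨(j : ℕ) - ((⟨0, hn0⟩ : Fin n) : ℕ),
              Nat.lt_of_le_of_lt (Nat.sub_le _ _) j.isLt⟩ : Fin n) = j := by
            apply Fin.ext; simp
          rw [h2, sub_self]
      have : x = g + (x - g) := by abel
      rw [this]
      exact Submodule.add_mem _ (Submodule.mem_sup_left hg) (Submodule.mem_sup_right hs)
end
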